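/- arXiv:1711.00428 — 7 statements merged into one kernel-verified Lean document; each statement's English description precedes it below -/
import Mathlib

section
/- If P is a well partial order of infinite cardinality κ, then the height h(P) is at least κ. -/
universe u

open Ordinal

/-- The rank of a well-founded relation: the least ordinal `γ` admitting a
strictly `r`-decreasing... i.e. `r a b → f a < f b`; equals `sup (rank a + 1)`. -/
noncomputable def relRank {β : Type u} (r : β → β → Prop) : Ordinal.{u} :=
  haveI := Classical.propDecidable (WellFounded r)
  if h : WellFounded r then ⨆ a : β, Order.succ ((h.apply a).rank) else 0

/-- `extRel T s t` : `s` strictly extends `t` (both in tree `T`). -/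
def extRel {α : Type u} (T : Set (List α)) (s t : T) : Prop :=
  t.1 <+: s.1 ∧ t.1 ≠ s.1

/-- Rank of a tree of finite sequences ordered by the initial segment relation. -/
noncomputable def treeRank {α : Type u} (T : Set (List α)) : Ordinal.{u} :=
  relRank (extRel T)

/-- Non-empty finite sequences of pairwise incomparable elements. -/
def IncSeqs (P : Type u) [Preorder P] : Set (List P) :=
  {l | l ≠ [] ∧ l.Pairwise fun x y => ¬ x ≤ y ∧ ¬ y ≤ x}

/-- Non-empty strictly descending finite sequences. -/
def DecSeqs (P : Type u) [Preorder P] : Set (List P) :=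
  {l | l ≠ [] ∧ l.Pairwise fun x y => y < x}

/-- Non-empty bad sequences. -/
def BadSeqs (P : Type u) [Preorder P] : Set (List P) :=
  {l | l ≠ [] ∧ l.Pairwise fun x y => ¬ x ≤ y}

/-- Width of a FAC (quasi-)order: the rank of its tree of antichain sequences. -/
noncomputable def width (P : Type u) [Preorder P] : Ordinal.{u} := treeRank (IncSeqs P)

/-- Height: the rank of the tree of strictly descending sequences. -/
noncomputable def height (P : Type u) [Preorder P] : Ordinal.{u} := treeRank (DecSeqs P)

/-- Maximal order type: the rank of the tree of bad sequences. -/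
noncomputable def mot (P : Type u) [Preorder P] : Ordinal.{u} := treeRank (BadSeqs P)

/-- Finite antichain condition. -/
def FAC (P : Type u) [Preorder P] : Prop :=
  ∀ A : Set P, IsAntichain (· ≤ ·) A → A.Finite

/-- Well quasi-order: every infinite sequence is good. -/
def IsWQO (P : Type u) [Preorder P] : Prop :=
  ∀ f : ℕ → P, ∃ i j : ℕ, i < j ∧ f i ≤ f j

/-- Well partial order. -/
def IsWPO (P : Type u) [Preorder P] : Prop :=
  WellFounded ((· < ·) : P → P → Prop) ∧ FAC P

/-! The rank function of a WPO `P` takes values below `h(P)`: a descending sequence ending in `x`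
extends by any `y < x`, so the rank of `x` is at most the rank of `[x]` in `Dec(P)`. The rank is
strictly monotone, so its fibres are antichains and hence finite. An infinite set mapped into
`{α | α < h(P)}` with finite fibres has at most `|h(P)|` elements, so `κ ≤ |h(P)|`. -/

theorem StrictMono.isAntichain_preimage_singleton {α β : Type*} [PartialOrder α] [Preorder β]
    {f : α → β} (hf : StrictMono f) (b : β) : IsAntichain (· ≤ ·) (f ⁻¹' {b}) :=
  fun _ hx _ hy hne hle => (hf (hle.lt_of_ne hne)).ne (hx.trans hy.symm)

theorem IsWellFounded.rank_le_rank_of_lift {α β : Type u} {r : α → α → Prop}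
    {s : β → β → Prop} [IsWellFounded α r] [IsWellFounded β s] (g : β → α)
    (hg : ∀ b a, r a (g b) → ∃ b', s b' b ∧ g b' = a) (b : β) :
    IsWellFounded.rank r (g b) ≤ IsWellFounded.rank s b := by
  induction b using IsWellFounded.induction s with
  | _ b ih =>
    rw [IsWellFounded.rank_eq r]
    refine Ordinal.iSup_le fun ⟨a, ha⟩ => ?_
    obtain ⟨b', hb', rfl⟩ := hg b a ha
    exact Order.succ_le_of_lt ((ih b' hb').trans_lt (IsWellFounded.rank_lt_of_rel hb'))

theorem rank_lt_relRank {β : Type u} {r : β → β → Prop} [IsWellFounded β r] (b : β) :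
    IsWellFounded.rank r b < relRank r := by
  rw [relRank, dif_pos IsWellFounded.wf]
  exact (Order.lt_succ _).trans_le (Ordinal.le_iSup _ b)

namespace DecSeqs

variable {P : Type u} [Preorder P]

noncomputable def last (t : DecSeqs P) : P := t.1.getLast t.2.1

theorem last_le_of_mem (t : DecSeqs P) {x : P} (hx : x ∈ t.1) : last t ≤ x :=
  (t.2.2.imp le_of_lt).rel_getLast (R := fun x y => y ≤ x) hx

theorem last_lt_last_of_extRel {s t : DecSeqs P} (h : extRel (DecSeqs P) s t) :
    last s < last t := by
  obtain ⟨⟨r, hr⟩, hne⟩ := h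
  have hr_ne : r ≠ [] := by rintro rfl; exact hne (by simpa using hr)
  have hs_last : last s = r.getLast hr_ne := by
    rw [← List.getLast_append_of_ne_nil (hr ▸ s.2.1) hr_ne]
    exact List.getLast_congr _ _ hr.symm
  have hpair := s.2.2
  rw [← hr, List.pairwise_append] at hpair
  rw [hs_last]
  exact hpair.2.2 _ (List.getLast_mem t.2.1) _ (List.getLast_mem hr_ne)

theorem wellFounded_extRel [WellFoundedLT P] : WellFounded (extRel (DecSeqs P)) :=
  Subrelation.wf last_lt_last_of_extRel (InvImage.wf last wellFounded_lt)

def snoc (t : DecSeqs P) (y : P) (hy : y < last t) : DecSeqs P :=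
  ⟨t.1 ++ [y], by simp, List.pairwise_append.2 ⟨t.2.2, List.pairwise_singleton _ _,
    fun x hx z hz => (List.mem_singleton.1 hz) ▸ hy.trans_le (last_le_of_mem t hx)⟩⟩

theorem last_snoc (t : DecSeqs P) (y : P) (hy : y < last t) : last (snoc t y hy) = y :=
  List.getLast_append_singleton _

theorem extRel_snoc (t : DecSeqs P) (y : P) (hy : y < last t) :
    extRel (DecSeqs P) (snoc t y hy) t :=
  ⟨⟨[y], rfl⟩, fun h => by simpa [snoc] using congrArg List.length h⟩

def singleton (x : P) : DecSeqs P := ⟨[x], List.cons_ne_nil _ _, List.pairwise_singleton _ _⟩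

end DecSeqs

theorem rank_lt_height {P : Type u} [Preorder P] [WellFoundedLT P] (x : P) :
    IsWellFounded.rank (· < ·) x < height P := by
  have : IsWellFounded _ (extRel (DecSeqs P)) := ⟨DecSeqs.wellFounded_extRel⟩
  calc IsWellFounded.rank (· < ·) x
        = IsWellFounded.rank (· < ·) (DecSeqs.last (DecSeqs.singleton x)) := rfl
    _ ≤ IsWellFounded.rank (extRel (DecSeqs P)) (DecSeqs.singleton x) :=
      IsWellFounded.rank_le_rank_of_lift DecSeqs.last
        (fun t y hy => ⟨_, DecSeqs.extRel_snoc t y hy, DecSeqs.last_snoc t y hy⟩) _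
    _ < height P := rank_lt_relRank _

/-- Valued in `(height P).ToType` rather than `Set.Iio (height P)` so that the codomain stays in
`Type u`, as the pigeonhole principle `Cardinal.exists_infinite_fiber` requires. -/
noncomputable def rankBelowHeight {P : Type u} [Preorder P] [WellFoundedLT P] (x : P) :
    (height P).ToType :=
  Ordinal.ToType.mk ⟨IsWellFounded.rank (· < ·) x, rank_lt_height x⟩

theorem strictMono_rankBelowHeight {P : Type u} [Preorder P] [WellFoundedLT P] :
    StrictMono (rankBelowHeight (P := P)) :=
  fun _ _ h => Ordinal.ToType.mk.strictMono (WellFoundedLT.rank_strictMono h)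

/-- **Dushnik–Miller.** A WPO of infinite cardinality `κ` has height `≥ κ`. -/
theorem stmt_3 {P : Type u} [PartialOrder P] (hwpo : IsWPO P)
    (κ : Cardinal.{u}) (hκ : Cardinal.aleph0 ≤ κ) (hcard : Cardinal.mk P = κ) :
    κ.ord ≤ height P := by
  obtain ⟨hwf, hfac⟩ := hwpo
  have : WellFoundedLT P := ⟨hwf⟩
  have : Infinite P := Cardinal.infinite_iff.2 (hcard ▸ hκ)
  rw [← hcard, Cardinal.ord_le]
  by_contra! hlt
  obtain ⟨o, ho⟩ := Cardinal.exists_infinite_fiber rankBelowHeight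
    (by rwa [Cardinal.mk_toType])
  exact Set.infinite_coe_iff.1 ho
    (hfac _ (strictMono_rankBelowHeight.isAntichain_preimage_singleton o))
end

section
/- For a WF poset P, the supremum over non-empty chains C of P of the heights h(C) is at most h(P). Moreover, if P is a WPO, this supremum is attained and equals h(P): there exists a chain C of P with h(C) = h(P). -/
/-!
The height of a well-founded poset is the rank of `<`: a descending sequence is traced by its
last element. Ranks cannot grow along a strictly monotone map, so subsets, in particular chains,
have height at most `h(P)`.

In a WPO the elements of a given rank `o < h(P)` form a nonempty finite antichain. Any finitely
many ranks are realised along a chain, by descending from an element of the largest one, so by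
compactness of the product of the finite levels one can choose an element of each rank `o < h(P)`
strictly increasingly in `o`. The chain of these choices has height `h(P)`.
-/

universe u

open Ordinal

open IsWellFounded Set

section RelRank
variable {α β : Type u} {r : α → α → Prop} {s : β → β → Prop}

theorem relRank_eq_iSup_rank [IsWellFounded α r] :
    relRank r = ⨆ a, Order.succ (rank r a) :=
  dif_pos IsWellFounded.wf

theorem rank_lt_relRank_s8 [IsWellFounded α r] (a : α) : rank r a < relRank r := by
  rw [relRank_eq_iSup_rank]
  exact (Order.lt_succ _).trans_le (Ordinal.le_iSup (fun a => Order.succ (rank r a)) a)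

theorem exists_rank_eq_of_lt_relRank [IsWellFounded α r] {o : Ordinal} (ho : o < relRank r) :
    ∃ a, rank r a = o := by
  rw [relRank_eq_iSup_rank, Ordinal.lt_iSup_iff] at ho
  obtain ⟨a, ha⟩ := ho
  exact mem_range_rank_of_le (Order.lt_succ_iff.1 ha)

theorem rank_le_rank_of_simulation [IsWellFounded α r] [IsWellFounded β s]
    {R : α → β → Prop} (hR : ∀ a b, R a b → ∀ a', r a' a → ∃ b', R a' b' ∧ s b' b)
    {a : α} {b : β} (h : R a b) : rank r a ≤ rank s b := by
  induction a using IsWellFounded.induction r generalizing b with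
  | _ a ih =>
    rw [rank_eq]
    refine Ordinal.iSup_le fun ⟨a', ha'⟩ => ?_
    obtain ⟨b', hb', hs⟩ := hR a b h a' ha'
    exact Order.succ_le_of_lt ((ih a' ha' hb').trans_lt (rank_lt_of_rel hs))

theorem relRank_le_relRank_of_simulation [IsWellFounded α r] [IsWellFounded β s]
    {R : α → β → Prop} (hR : ∀ a b, R a b → ∀ a', r a' a → ∃ b', R a' b' ∧ s b' b)
    (htotal : ∀ a, ∃ b, R a b) : relRank r ≤ relRank s := by
  rw [relRank_eq_iSup_rank, relRank_eq_iSup_rank]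
  refine Ordinal.iSup_le fun a => ?_
  obtain ⟨b, hb⟩ := htotal a
  exact (Order.succ_le_succ (rank_le_rank_of_simulation hR hb)).trans
    (Ordinal.le_iSup (fun b => Order.succ (rank s b)) b)

theorem relRank_le_relRank_of_map [IsWellFounded β s] (f : α → β)
    (hf : ∀ a a', r a a' → s (f a) (f a')) : relRank r ≤ relRank s :=
  have : IsWellFounded α r := ⟨Subrelation.wf (hf _ _) (InvImage.wf f IsWellFounded.wf)⟩
  relRank_le_relRank_of_simulation (R := fun a b => f a = b)
    (by rintro a _ rfl a' h; exact ⟨_, rfl, hf _ _ h⟩) fun a => ⟨_, rfl⟩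

end RelRank

section Height
variable {P : Type u} [Preorder P]

theorem DecSeqs.getLast_le {l : List P} (hl : l ∈ DecSeqs P) {x : P} (hx : x ∈ l) :
    l.getLast hl.1 ≤ x :=
  (hl.2.imp fun h => le_of_lt h).rel_getLast (R := (· ≥ ·)) hx

theorem DecSeqs.getLast_lt_of_extRel {l l' : DecSeqs P} (h : extRel (DecSeqs P) l' l) :
    l'.1.getLast l'.2.1 < l.1.getLast l.2.1 := by
  obtain ⟨⟨t, ht⟩, hne⟩ := h
  have ht₀ : t ≠ [] := by rintro rfl; simp_all
  have hmem : l.1.getLast l.2.1 ∈ l'.1.dropLast := by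
    rw [← ht, List.dropLast_append_of_ne_nil ht₀]
    exact List.mem_append_left _ (List.getLast_mem _)
  exact l'.2.2.rel_dropLast_getLast hmem

theorem DecSeqs.append_singleton_mem {l : List P} (hl : l ∈ DecSeqs P) {b : P}
    (hb : b < l.getLast hl.1) : l ++ [b] ∈ DecSeqs P := by
  refine ⟨by simp, List.pairwise_append.2 ⟨hl.2, List.pairwise_singleton _ _, ?_⟩⟩
  intro x hx y hy
  obtain rfl := List.mem_singleton.1 hy
  exact hb.trans_le (getLast_le hl hx)

theorem wellFounded_extRel_decSeqs [WellFoundedLT P] : WellFounded (extRel (DecSeqs P)) :=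
  Subrelation.wf DecSeqs.getLast_lt_of_extRel
    (InvImage.wf (fun l : DecSeqs P => l.1.getLast l.2.1) wellFounded_lt)

theorem height_eq_relRank [WellFoundedLT P] :
    height P = relRank ((· < ·) : P → P → Prop) := by
  have : IsWellFounded (DecSeqs P) (extRel (DecSeqs P)) := ⟨wellFounded_extRel_decSeqs⟩
  refine le_antisymm (relRank_le_relRank_of_map _ fun _ _ => DecSeqs.getLast_lt_of_extRel) ?_
  refine relRank_le_relRank_of_simulation (R := fun a l => l.1.getLast l.2.1 = a) ?_
    fun a => ⟨⟨[a], by simp, List.pairwise_singleton _ _⟩, rfl⟩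
  rintro _ l rfl b hb
  refine ⟨⟨l.1 ++ [b], DecSeqs.append_singleton_mem l.2 hb⟩,
    List.getLast_append_of_ne_nil _ (List.cons_ne_nil _ _), ⟨[b], rfl⟩, ?_⟩
  simp

theorem height_subtype_le [WellFoundedLT P] (S : Set P) : height S ≤ height P := by
  rw [height_eq_relRank, height_eq_relRank]
  exact relRank_le_relRank_of_map Subtype.val fun _ _ h => h

theorem le_height_of_strictMono {Q : Type u} [Preorder Q] [WellFoundedLT Q] {H : Ordinal.{u}}
    {f : Iio H → Q} (hf : StrictMono f) : H ≤ height Q := by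
  have hrank : ∀ o (ho : o < H), o ≤ rank (· < ·) (f ⟨o, ho⟩) := by
    intro o
    induction o using WellFoundedLT.induction with
    | _ o ih =>
      refine fun ho => le_of_forall_lt fun c hc => ?_
      have hfc : f ⟨c, hc.trans ho⟩ < f ⟨o, ho⟩ := hf hc
      exact (ih c hc (hc.trans ho)).trans_lt (rank_lt_of_rel hfc)
  rw [height_eq_relRank]
  exact le_of_forall_lt fun o ho => (hrank o ho).trans_lt (rank_lt_relRank_s8 _)

theorem exists_lt_rank_eq_of_lt_rank [WellFoundedLT P] {x : P} {o : Ordinal} (ho : o < rank (· < ·) x) :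
    ∃ y < x, rank (· < ·) y = o := by
  induction x using WellFoundedLT.induction with
  | _ x ih =>
    rw [rank_eq, Ordinal.lt_iSup_iff] at ho
    obtain ⟨⟨y, hyx⟩, hy⟩ := ho
    rcases (Order.lt_succ_iff.1 hy).eq_or_lt with rfl | h
    · exact ⟨y, hyx, rfl⟩
    · obtain ⟨z, hzy, rfl⟩ := ih y hyx h
      exact ⟨z, hzy.trans hyx, rfl⟩

end Height

theorem exists_forall_rel_of_forall_finset {ι : Type*} {X : ι → Type*} [∀ i, Finite (X i)]
    (R : ∀ i j, X i → X j → Prop)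
    (h : ∀ s : Finset ι, ∃ f : ∀ i, X i, ∀ i ∈ s, ∀ j ∈ s, R i j (f i) (f j)) :
    ∃ f : ∀ i, X i, ∀ i j, R i j (f i) (f j) := by
  classical
  let : ∀ i, TopologicalSpace (X i) := fun _ => ⊥
  have : ∀ i, DiscreteTopology (X i) := fun _ => ⟨rfl⟩
  let K : ι × ι → Set (∀ i, X i) := fun p => {f | R p.1 p.2 (f p.1) (f p.2)}
  have hK : ∀ p, IsClosed (K p) := fun p =>
    (isClosed_discrete {q : X p.1 × X p.2 | R p.1 p.2 q.1 q.2}).preimage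
      ((continuous_apply p.1).prodMk (continuous_apply p.2))
  have hfinite : ∀ u : Finset (ι × ι), (Set.univ ∩ ⋂ p ∈ u, K p).Nonempty := by
    intro u
    obtain ⟨f, hf⟩ := h (u.image Prod.fst ∪ u.image Prod.snd)
    refine ⟨f, mem_univ f, mem_iInter₂.2 fun p hp => hf _ ?_ _ ?_⟩
    · exact Finset.mem_union_left _ (Finset.mem_image_of_mem _ hp)
    · exact Finset.mem_union_right _ (Finset.mem_image_of_mem _ hp)
  obtain ⟨f, -, hf⟩ := isCompact_univ.inter_iInter_nonempty K hK hfinite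
  exact ⟨f, fun i j => mem_iInter.1 hf (i, j)⟩

section Chains
variable {P : Type u} [PartialOrder P] [WellFoundedLT P]

theorem exists_strictMonoOn_rank_eq (s : Finset Ordinal.{u}) (x : P)
    (hs : ∀ o ∈ s, o ≤ rank (· < ·) x) :
    ∃ g : Ordinal.{u} → P,
      StrictMonoOn g s ∧ ∀ o ∈ s, rank (· < ·) (g o) = o ∧ g o ≤ x := by
  classical
  induction s using Finset.induction_on_max generalizing x with
  | empty => exact ⟨fun _ => x, by simp [StrictMonoOn], by simp⟩
  | insert a t hta ih =>
    obtain ⟨y, hyx, hya⟩ : ∃ y ≤ x, rank (· < ·) y = a := by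
      rcases (hs a (Finset.mem_insert_self a t)).eq_or_lt with h | h
      · exact ⟨x, le_rfl, h.symm⟩
      · obtain ⟨y, hyx, hya⟩ := exists_lt_rank_eq_of_lt_rank h
        exact ⟨y, hyx.le, hya⟩
    obtain ⟨g, hg, hgt⟩ := ih y fun o ho => hya ▸ (hta o ho).le
    have hgy : ∀ o ∈ t, g o < y := fun o ho =>
      (hgt o ho).2.lt_of_ne fun h => (hta o ho).ne (by rw [← hya, ← h, (hgt o ho).1])
    have hupdate : ∀ o ∈ t, Function.update g a y o = g o := fun o ho =>
      Function.update_of_ne (hta o ho).ne _ _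
    refine ⟨Function.update g a y, ?_, ?_⟩
    · rw [Finset.coe_insert, strictMonoOn_insert_iff_of_forall_le fun o ho => (hta o ho).le]
      refine ⟨fun o ho _ => ?_, fun o ho o' ho' h => ?_⟩
      · rw [hupdate o ho, Function.update_self]
        exact hgy o ho
      · rw [hupdate o ho, hupdate o' ho']
        exact hg ho ho' h
    · intro o ho
      rcases Finset.mem_insert.1 ho with rfl | ho
      · rw [Function.update_self]
        exact ⟨hya, hyx⟩
      · rw [hupdate o ho]
        exact ⟨(hgt o ho).1, (hgt o ho).2.trans hyx⟩

theorem FAC.finite_rank_eq (hfac : FAC P) (o : Ordinal) :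
    {x : P | rank (· < ·) x = o}.Finite :=
  hfac _ fun _ hx _ hy hxy hle => (rank_lt_of_rel (hle.lt_of_ne hxy)).ne (hx.trans hy.symm)

theorem FAC.exists_strictMono_Iio_relRank (hfac : FAC P) :
    ∃ f : Iio (relRank ((· < ·) : P → P → Prop)) → P, StrictMono f := by
  set H := relRank ((· < ·) : P → P → Prop)
  let X (o : Iio H) := {x : P // rank (· < ·) x = o}
  have : ∀ o, Nonempty (X o) := fun o =>
    let ⟨x, hx⟩ := exists_rank_eq_of_lt_relRank o.2
    ⟨⟨x, hx⟩⟩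
  have : ∀ o, Finite (X o) := fun o => (hfac.finite_rank_eq o).to_subtype
  obtain ⟨f, hf⟩ : ∃ f : ∀ o, X o, ∀ o o', o < o' → (f o).1 < (f o').1 := by
    refine exists_forall_rel_of_forall_finset (X := X) (fun o o' x y => o < o' → x.1 < y.1)
      fun s => ?_
    obtain ⟨f₀⟩ : Nonempty (∀ o, X o) := inferInstance
    rcases s.eq_empty_or_nonempty with rfl | hs
    · exact ⟨f₀, by simp⟩
    obtain ⟨x, hx⟩ := exists_rank_eq_of_lt_relRank (s.max' hs).2
    obtain ⟨g, hg, hgs⟩ := exists_strictMonoOn_rank_eq (s.image Subtype.val) x <| by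
      simp only [Finset.mem_image, hx]
      rintro _ ⟨o, ho, rfl⟩
      exact s.le_max' o ho
    have hmem {o} (ho : o ∈ s) : o.1 ∈ s.image Subtype.val := Finset.mem_image_of_mem _ ho
    refine ⟨fun o => if ho : o ∈ s then ⟨g o, (hgs o (hmem ho)).1⟩ else f₀ o, ?_⟩
    intro o ho o' ho' h
    simp only [dif_pos ho, dif_pos ho']
    exact hg (hmem ho) (hmem ho') h
  exact ⟨fun o => f o, fun o o' h => hf o o' h⟩

end Chains

/-- For a WF poset the sup of heights of non-empty chains is at
most the height; for a WPO it is attained and equals the height. -/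
theorem stmt_8 {P : Type u} [PartialOrder P]
    (hwf : WellFounded ((· < ·) : P → P → Prop)) :
    (⨆ C : {C : Set P // IsChain (· ≤ ·) C ∧ C.Nonempty}, height ↥(C.1)) ≤ height P ∧
    (FAC P → Nonempty P →
      ∃ C : Set P, IsChain (· ≤ ·) C ∧ C.Nonempty ∧ height ↥C = height P) := by
  have : WellFoundedLT P := ⟨hwf⟩
  refine ⟨Ordinal.iSup_le fun C => height_subtype_le C.1, fun hfac ⟨x⟩ => ?_⟩
  obtain ⟨f, hf⟩ := hfac.exists_strictMono_Iio_relRank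
  have : Nonempty (Iio (relRank ((· < ·) : P → P → Prop))) :=
    ⟨⟨0, lt_of_le_of_lt zero_le (rank_lt_relRank_s8 x)⟩⟩
  refine ⟨range f, hf.monotone.isChain_range, range_nonempty f,
    (height_subtype_le _).antisymm ?_⟩
  rw [height_eq_relRank]
  exact le_height_of_strictMono (f := rangeFactorization f) fun _ _ h => hf h
end

section
/- For any FAC poset P, the width w(P) (the rank of the tree Inc(P) of non-empty finite sequences of pairwise incomparable elements ordered by initial segments) equals the antichain rank of P, namely the ordinal rank of the well-founded poset A(P) of non-empty finite antichains of P ordered by reverse inclusion. -/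
universe u

open Ordinal

/-!
Sending a sequence of pairwise incomparable elements to its set of entries maps the tree
`Inc(P)` onto `A(P)`, and strict extensions to strict supersets. Conversely, every antichain
strictly containing the entries of a sequence is the set of entries of a strict extension of
that sequence (append the missing elements). A map with these two properties preserves ranks,
so the suprema defining the two ranks agree. The finite antichain condition makes `A(P)`
well-founded: a strictly increasing chain of finite antichains has an infinite antichain as union.
-/

section RankTransfer

variable {α β : Type u} {r : α → α → Prop} {s : β → β → Prop} {f : α → β}

theorem Acc.rank_eq_of_map_of_lift (hmap : ∀ ⦃a b⦄, r a b → s (f a) (f b))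
    (hlift : ∀ a c, s c (f a) → ∃ b, r b a ∧ f b = c) {a : α} (ha : Acc r a)
    (hfa : Acc s (f a)) : ha.rank = hfa.rank := by
  induction ha with
  | intro a ha IH =>
  apply le_antisymm
  · rw [Acc.rank_eq]
    refine Ordinal.iSup_le fun ⟨b, hb⟩ => Order.succ_le_of_lt ?_
    rw [IH b hb (hfa.inv (hmap hb))]
    exact hfa.rank_lt_of_rel (hmap hb)
  · rw [Acc.rank_eq]
    refine Ordinal.iSup_le fun ⟨c, hc⟩ => Order.succ_le_of_lt ?_
    obtain ⟨b, hb, rfl⟩ := hlift a c hc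
    rw [← IH b hb (hfa.inv hc)]
    exact (Acc.intro a ha).rank_lt_of_rel hb

theorem relRank_eq_of_map_of_lift (hs : WellFounded s) (hf : Function.Surjective f)
    (hmap : ∀ ⦃a b⦄, r a b → s (f a) (f b))
    (hlift : ∀ a c, s c (f a) → ∃ b, r b a ∧ f b = c) :
    relRank r = relRank s := by
  have hr : WellFounded r := Subrelation.wf (fun h => hmap h) (InvImage.wf f hs)
  unfold relRank
  rw [dif_pos hr, dif_pos hs, ← hf.iSup_comp]
  simp only [Acc.rank_eq_of_map_of_lift hmap hlift (hr.apply _) (hs.apply _)]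

end RankTransfer

theorem Finset.infinite_iUnion_of_strictMono {α : Type*} {f : ℕ → Finset α}
    (hf : StrictMono f) :
    (⋃ n, (f n : Set α)).Infinite := by
  intro hfin
  have hcard : StrictMono fun n => (f n).card := fun m n h => Finset.card_lt_card (hf h)
  have hsub : f (hfin.toFinset.card + 1) ⊆ hfin.toFinset := fun x hx =>
    hfin.mem_toFinset.2 (Set.mem_iUnion.2 ⟨_, hx⟩)
  have := Finset.card_le_card hsub
  have := hcard.le_apply (x := hfin.toFinset.card + 1)
  omega

section Antichains

variable {P : Type u} [Preorder P]

abbrev FinAntichain (P : Type u) [Preorder P] :=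
  {A : Finset P // A.Nonempty ∧ IsAntichain (· ≤ ·) (A : Set P)}

theorem wellFounded_ssuperset_finAntichain (hfac : FAC P) :
    WellFounded fun S T : FinAntichain P => T.1 ⊂ S.1 := by
  refine wellFounded_iff_isEmpty_descending_chain.2 ⟨fun ⟨f, hf⟩ => ?_⟩
  have hmono : StrictMono fun n => (f n).1 := strictMono_nat_of_lt_succ hf
  have hdir : Directed (· ⊆ ·) fun n => ((f n).1 : Set P) :=
    (monotone_nat_of_le_succ fun n => Finset.coe_subset.2 (hf n).subset).directed_le
  exact Finset.infinite_iUnion_of_strictMono hmono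
    (hfac _ ((Set.pairwise_iUnion hdir).2 fun n => (f n).2.2))

theorem List.pairwise_incomparable_iff {l : List P} :
    l.Pairwise (fun x y => ¬ x ≤ y ∧ ¬ y ≤ x) ↔
      l.Nodup ∧ IsAntichain (· ≤ ·) {x | x ∈ l} := by
  have : Std.Symm fun x y : P => ¬ x ≤ y ∧ ¬ y ≤ x := ⟨fun _ _ h => ⟨h.2, h.1⟩⟩
  constructor
  · intro hl
    exact ⟨hl.imp fun h hxy => h.1 hxy.le, hl.set_pairwise.mono' fun _ _ h => h.1⟩
  · rintro ⟨hnd, hl⟩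
    exact hnd.pairwise_of_set_pairwise fun x hx y hy hxy =>
      ⟨hl hx hy hxy, hl hy hx hxy.symm⟩

theorem mem_incSeqs_iff {l : List P} :
    l ∈ IncSeqs P ↔ l ≠ [] ∧ l.Nodup ∧ IsAntichain (· ≤ ·) {x | x ∈ l} :=
  and_congr_right fun _ => List.pairwise_incomparable_iff

variable [DecidableEq P]

def IncSeqs.toFinAntichain (l : IncSeqs P) : FinAntichain P :=
  ⟨l.1.toFinset, (List.toFinset_nonempty_iff _).2 l.2.1, by
    rw [List.coe_toFinset]
    exact (mem_incSeqs_iff.1 l.2).2.2⟩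

theorem IncSeqs.toFinset_ssubset_of_extRel {l l' : IncSeqs P} (h : extRel (IncSeqs P) l' l) :
    l.1.toFinset ⊂ l'.1.toFinset := by
  obtain ⟨⟨d, hd⟩, hne⟩ := h
  obtain ⟨x, hx⟩ := List.exists_mem_of_ne_nil d (by rintro rfl; simp at hd; exact hne hd)
  have hnd : (l.1 ++ d).Nodup := hd ▸ (mem_incSeqs_iff.1 l'.2).2.1
  refine (Finset.ssubset_iff_of_subset ?_).2 ⟨x, ?_, ?_⟩
  · exact fun y hy => List.mem_toFinset.2 (hd ▸ List.mem_append_left _ (List.mem_toFinset.1 hy))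
  · exact List.mem_toFinset.2 (hd ▸ List.mem_append_right _ hx)
  · exact fun hxl => List.disjoint_of_nodup_append hnd (List.mem_toFinset.1 hxl) hx

theorem exists_append_mem_incSeqs {l : List P} (hl : l.Nodup) {B : FinAntichain P}
    (hlB : l.toFinset ⊆ B.1) :
    ∃ d, l ++ d ∈ IncSeqs P ∧ (l ++ d).toFinset = B.1 := by
  have hfin : (l ++ (B.1 \ l.toFinset).toList).toFinset = B.1 := by
    rw [List.toFinset_append, Finset.toList_toFinset, Finset.union_sdiff_of_subset hlB]
  refine ⟨_, mem_incSeqs_iff.2 ⟨?_, ?_, ?_⟩, hfin⟩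
  · rw [← List.toFinset_nonempty_iff, hfin]
    exact B.2.1
  · refine hl.append (Finset.nodup_toList _) fun x hxl hxd => ?_
    exact (Finset.mem_sdiff.1 (Finset.mem_toList.1 hxd)).2 (List.mem_toFinset.2 hxl)
  · refine B.2.2.subset fun x hx => ?_
    rw [Set.mem_ofPred_eq, ← List.mem_toFinset, hfin] at hx
    exact hx

theorem IncSeqs.toFinAntichain_surjective :
    Function.Surjective (IncSeqs.toFinAntichain (P := P)) := fun B => by
  obtain ⟨d, hd, hfin⟩ := exists_append_mem_incSeqs List.nodup_nil (B := B) (by simp)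
  exact ⟨⟨[] ++ d, hd⟩, Subtype.ext hfin⟩

theorem IncSeqs.exists_extRel_toFinAntichain_eq (l : IncSeqs P) (B : FinAntichain P)
    (hB : (IncSeqs.toFinAntichain l).1 ⊂ B.1) :
    ∃ l' : IncSeqs P, extRel (IncSeqs P) l' l ∧ IncSeqs.toFinAntichain l' = B := by
  obtain ⟨d, hd, hfin⟩ :=
    exists_append_mem_incSeqs (mem_incSeqs_iff.1 l.2).2.1 hB.subset
  refine ⟨⟨l.1 ++ d, hd⟩, ⟨List.prefix_append _ _, fun h => ?_⟩, Subtype.ext hfin⟩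
  exact hB.ne (congrArg List.toFinset h |>.trans hfin)

end Antichains

/-- The width of a FAC poset equals its antichain rank: the rank of
the well-founded poset of non-empty (finite) antichains ordered by reverse inclusion. -/
theorem stmt_9 {P : Type u} [PartialOrder P] (hfac : FAC P) :
    width P =
      relRank (fun S T : {A : Finset P // A.Nonempty ∧ IsAntichain (· ≤ ·) (A : Set P)} =>
        T.1 ⊂ S.1) := by
  classical
  exact relRank_eq_of_map_of_lift (wellFounded_ssuperset_finAntichain hfac)
    IncSeqs.toFinAntichain_surjective
    (fun _ _ h => IncSeqs.toFinset_ssubset_of_extRel h)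
    IncSeqs.exists_extRel_toFinAntichain_eq
end

section
/- Let {P_i : i < α} be a family of WQOs indexed by an ordinal α. Then the lexicographic sum Σ_{i<α} P_i is a WQO, and o(Σ_{i<α} P_i) = Σ_{i<α} o(P_i), h(Σ_{i<α} P_i) = Σ_{i<α} h(P_i), and w(Σ_{i<α} P_i) = sup_{i<α} w(P_i). -/
universe u

open Ordinal

/-- Transfinite sum of ordinals along a well-ordered index: the order type of the
lexicographic sum of the corresponding chains. -/
noncomputable def ordSum {ι : Type u} [LinearOrder ι] [WellFoundedLT ι]
    (γ : ι → Ordinal.{u}) : Ordinal.{u} :=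
  haveI := Classical.propDecidable
    (WellFounded ((· < ·) : Lex (Σ i, (γ i).ToType) → _ → Prop))
  if h : WellFounded ((· < ·) : Lex (Σ i, (γ i).ToType) → _ → Prop) then
    haveI : WellFoundedLT (Lex (Σ i, (γ i).ToType)) := ⟨h⟩
    Ordinal.type ((· < ·) : Lex (Σ i, (γ i).ToType) → _ → Prop)
  else 0

namespace S13

variable {α β : Type u}

noncomputable def rk {r : α → α → Prop} (h : WellFounded r) (a : α) : Ordinal.{u} :=
  (h.apply a).rank

theorem rk_eq {r : α → α → Prop} (h : WellFounded r) (a : α) :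
    rk h a = ⨆ b : {b // r b a}, Order.succ (rk h b) :=
  (h.apply a).rank_eq

theorem rk_lt {r : α → α → Prop} (h : WellFounded r) {a b : α} (hr : r a b) :
    rk h a < rk h b :=
  Acc.rank_lt_of_rel (h.apply b) hr

theorem relRank_eq_of_wf {r : α → α → Prop} (h : WellFounded r) :
    relRank r = ⨆ a : α, Order.succ (rk h a) := dif_pos h

theorem succ_rk_le {r : α → α → Prop} (h : WellFounded r) (a : α) :
    Order.succ (rk h a) ≤ relRank r := by
  rw [relRank_eq_of_wf h]
  exact Ordinal.le_iSup _ a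

theorem rk_lt_relRank {r : α → α → Prop} (h : WellFounded r) (a : α) :
    rk h a < relRank r :=
  (Order.lt_succ _).trans_le (succ_rk_le h a)

theorem exists_rk_eq {r : α → α → Prop} (h : WellFounded r) {o : Ordinal.{u}}
    (ho : o < relRank r) : ∃ a, rk h a = o := by
  rw [relRank_eq_of_wf h, Ordinal.lt_iSup_iff] at ho
  obtain ⟨a, ha⟩ := ho
  obtain ⟨b, hb, hbo⟩ := Acc.mem_range_rank_of_le (h.apply a) (Order.lt_succ_iff.1 ha)
  exact ⟨b, hbo⟩

theorem relRank_empty {r : α → α → Prop} (h : IsEmpty α) : relRank r = 0 := by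
  have hwf : WellFounded r := ⟨fun a => h.elim a⟩
  rw [relRank_eq_of_wf hwf]
  exact le_antisymm (Ordinal.iSup_le fun a => h.elim a) zero_le

theorem relRank_pos {r : α → α → Prop} (h : WellFounded r) (a : α) : relRank r ≠ 0 := by
  have := rk_lt_relRank h a
  exact fun h0 => by simp [h0] at this

/-- transport of rank along a predecessor-surjective relation map -/
theorem rk_transport {r : α → α → Prop} {s : β → β → Prop} (hs : WellFounded s) (f : α → β)
    (h1 : ∀ a a', r a' a → s (f a') (f a))
    (h2 : ∀ a c, s c (f a) → ∃ a', r a' a ∧ f a' = c) :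
    ∃ hr : WellFounded r, ∀ a, rk hr a = rk hs (f a) := by
  have hr : WellFounded r := Subrelation.wf (fun {a' a} h => h1 a a' h) (InvImage.wf f hs)
  refine ⟨hr, fun a => ?_⟩
  induction a using hr.induction with
  | _ a IH =>
    apply le_antisymm
    · rw [rk_eq hr a]
      apply Ordinal.iSup_le
      rintro ⟨b, hb⟩
      rw [IH b hb]
      exact Order.succ_le_of_lt (rk_lt hs (h1 a b hb))
    · rw [rk_eq hs (f a)]
      apply Ordinal.iSup_le
      rintro ⟨c, hc⟩
      obtain ⟨a', ha', rfl⟩ := h2 a c hc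
      rw [← IH a' ha']
      exact Order.succ_le_of_lt (rk_lt hr ha')

theorem relRank_transport {r : α → α → Prop} {s : β → β → Prop} (hs : WellFounded s) (f : α → β)
    (h1 : ∀ a a', r a' a → s (f a') (f a))
    (h2 : ∀ a c, s c (f a) → ∃ a', r a' a ∧ f a' = c)
    (h3 : Function.Surjective f) :
    relRank r = relRank s := by
  obtain ⟨hr, hrk⟩ := rk_transport hs f h1 h2
  rw [relRank_eq_of_wf hr, relRank_eq_of_wf hs]
  apply le_antisymm
  · exact Ordinal.iSup_le fun a => (hrk a ▸ Ordinal.le_iSup _ (f a) : _)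
  · apply Ordinal.iSup_le
    intro b
    obtain ⟨a, rfl⟩ := h3 b
    rw [← hrk a]
    exact Ordinal.le_iSup (fun a => Order.succ (rk hr a)) a

theorem sigmaLex_wf {ι : Type u} {A : ι → Type u} {rι : ι → ι → Prop}
    {s : ∀ i, A i → A i → Prop} (hι : WellFounded rι) (hs : ∀ i, WellFounded (s i)) :
    WellFounded (Sigma.Lex rι s) := by
  have main : ∀ i, ∀ x : A i, Acc (Sigma.Lex rι s) ⟨i, x⟩ := by
    intro i
    induction i using hι.induction with
    | _ i IHi =>
      intro x
      induction x using (hs i).induction with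
      | _ x IHx =>
        constructor
        rintro ⟨j, y⟩ h
        cases h with
        | left _ _ h => exact IHi _ h _
        | right _ _ h => exact IHx _ h
  exact ⟨fun ⟨i, x⟩ => main i x⟩

noncomputable def sumBelow {ι : Type u} [LinearOrder ι] [wf : WellFoundedLT ι]
    (γ : ι → Ordinal.{u}) : ι → Ordinal.{u} :=
  wf.wf.fix (fun i R => ⨆ j : {j // j < i}, (R j j.2 + γ j))

theorem sumBelow_eq {ι : Type u} [LinearOrder ι] [wf : WellFoundedLT ι]
    (γ : ι → Ordinal.{u}) (i : ι) :
    sumBelow γ i = ⨆ j : {j // j < i}, (sumBelow γ j + γ j) :=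
  wf.wf.fix_eq _ i

theorem sumBelow_le {ι : Type u} [LinearOrder ι] [WellFoundedLT ι]
    (γ : ι → Ordinal.{u}) {i j : ι} (h : j < i) :
    sumBelow γ j + γ j ≤ sumBelow γ i := by
  rw [sumBelow_eq γ i]
  exact Ordinal.le_iSup (fun j : {j // j < i} => sumBelow γ j + γ j) ⟨j, h⟩

section SigmaLex
variable {ι : Type u} [LinearOrder ι] [WellFoundedLT ι] {A : ι → Type u}
  {s : ∀ i, A i → A i → Prop}

theorem rank_sigmaLex (hs : ∀ i, WellFounded (s i))
    (hw : WellFounded (Sigma.Lex ((· < ·) : ι → ι → Prop) s)) :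
    ∀ i (x : A i), rk hw ⟨i, x⟩ = sumBelow (fun i => relRank (s i)) i + rk (hs i) x := by
  set γ := fun i => relRank (s i) with hγ
  set R := sumBelow γ with hR
  intro i
  induction i using (wellFounded_lt (α := ι)).induction with
  | _ i IH1 =>
    intro x
    induction x using (hs i).induction with
    | _ x IH2 =>
      have hD : ∀ j, j ≤ i → R j ≤ rk hw ⟨i, x⟩ := by
        intro j
        induction j using (wellFounded_lt (α := ι)).induction with
        | _ j IHD =>
          intro hj
          rw [hR, sumBelow_eq]
          apply Ordinal.iSup_le
          rintro ⟨k, hk⟩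
          have hki : k < i := lt_of_lt_of_le hk hj
          by_cases hne : Nonempty (A k)
          · have hγk : γ k = ⨆ y : A k, Order.succ (rk (hs k) y) := relRank_eq_of_wf (hs k)
            rw [hγk, (isNormal_add_right (sumBelow γ k)).map_iSup (Ordinal.bddAbove_range _)]
            apply Ordinal.iSup_le
            intro y
            rw [Ordinal.add_succ, ← IH1 k hki y]
            exact Order.succ_le_of_lt (rk_lt hw (Sigma.Lex.left _ _ hki))
          · have : γ k = 0 := relRank_empty (not_nonempty_iff.mp hne)
            rw [this, add_zero]
            exact IHD k hk hki.le
      apply le_antisymm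
      · rw [rk_eq hw ⟨i, x⟩]
        apply Ordinal.iSup_le
        rintro ⟨⟨j, y⟩, hp⟩
        cases hp with
        | left _ _ h =>
          rw [IH1 j h y, ← Ordinal.add_succ]
          calc R j + Order.succ (rk (hs j) y) ≤ R j + γ j :=
                add_le_add_right (succ_rk_le (hs j) y) _
            _ ≤ R i := sumBelow_le γ h
            _ ≤ R i + rk (hs i) x := le_self_add
        | right _ _ h =>
          rw [IH2 y h, ← Ordinal.add_succ]
          exact add_le_add_right (Order.succ_le_of_lt (rk_lt (hs i) h)) _
      · by_cases hne : Nonempty {y // s i y x}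
        · rw [rk_eq (hs i) x, (isNormal_add_right (R i)).map_iSup (Ordinal.bddAbove_range _)]
          apply Ordinal.iSup_le
          rintro ⟨y, hy⟩
          rw [Ordinal.add_succ, ← IH2 y hy]
          exact Order.succ_le_of_lt (rk_lt hw (Sigma.Lex.right _ _ hy))
        · have : rk (hs i) x = 0 := by
            rw [rk_eq (hs i) x]
            haveI := not_nonempty_iff.mp hne
            exact ciSup_of_empty _
          rw [this, add_zero]
          exact hD i le_rfl

theorem relRank_sigmaLex (hs : ∀ i, WellFounded (s i))
    (hw : WellFounded (Sigma.Lex ((· < ·) : ι → ι → Prop) s)) :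
    relRank (Sigma.Lex ((· < ·) : ι → ι → Prop) s) =
      ⨆ p : Σ i, A i, Order.succ (sumBelow (fun i => relRank (s i)) p.1 + rk (hs p.1) p.2) := by
  rw [relRank_eq_of_wf hw]
  congr 1
  ext ⟨i, x⟩
  rw [rank_sigmaLex hs hw i x]

/-- componentwise relRank determines relRank of the lex sigma -/
theorem relRank_sigmaLex_congr {A' : ι → Type u} {s' : ∀ i, A' i → A' i → Prop}
    (hs : ∀ i, WellFounded (s i)) (hs' : ∀ i, WellFounded (s' i))
    (hcong : ∀ i, relRank (s i) = relRank (s' i))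
    (hw : WellFounded (Sigma.Lex ((· < ·) : ι → ι → Prop) s))
    (hw' : WellFounded (Sigma.Lex ((· < ·) : ι → ι → Prop) s')) :
    relRank (Sigma.Lex ((· < ·) : ι → ι → Prop) s) =
      relRank (Sigma.Lex ((· < ·) : ι → ι → Prop) s') := by
  have key : ∀ {B B' : ι → Type u} {t : ∀ i, B i → B i → Prop} {t' : ∀ i, B' i → B' i → Prop}
      (ht : ∀ i, WellFounded (t i)) (ht' : ∀ i, WellFounded (t' i))
      (hc : ∀ i, relRank (t i) ≤ relRank (t' i))
      (hcR : ∀ i, sumBelow (fun i => relRank (t i)) i = sumBelow (fun i => relRank (t' i)) i)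
      (hwt : WellFounded (Sigma.Lex ((· < ·) : ι → ι → Prop) t))
      (hwt' : WellFounded (Sigma.Lex ((· < ·) : ι → ι → Prop) t')),
      relRank (Sigma.Lex ((· < ·) : ι → ι → Prop) t) ≤
        relRank (Sigma.Lex ((· < ·) : ι → ι → Prop) t') := by
    intro B B' t t' ht ht' hc hcR hwt hwt'
    rw [relRank_sigmaLex ht hwt, relRank_sigmaLex ht' hwt']
    apply Ordinal.iSup_le
    rintro ⟨i, x⟩
    have h1 : rk (ht i) x < relRank (t' i) :=
      lt_of_lt_of_le ((Order.lt_succ _).trans_le (succ_rk_le (ht i) x)) (hc i)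
    obtain ⟨y, hy⟩ : ∃ y, rk (ht' i) y = rk (ht i) x := by
      rw [relRank_eq_of_wf (ht' i), Ordinal.lt_iSup_iff] at h1
      obtain ⟨a, ha⟩ := h1
      obtain ⟨b, hb, hbo⟩ := Acc.mem_range_rank_of_le ((ht' i).apply a) (Order.lt_succ_iff.1 ha)
      exact ⟨b, hbo⟩
    calc Order.succ (sumBelow (fun i => relRank (t i)) i + rk (ht i) x)
        = Order.succ (sumBelow (fun i => relRank (t' i)) i + rk (ht' i) y) := by rw [hcR, hy]
      _ ≤ _ := Ordinal.le_iSup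
          (fun p : Σ i, B' i =>
            Order.succ (sumBelow (fun i => relRank (t' i)) p.1 + rk (ht' p.1) p.2)) ⟨i, y⟩
  have hcR : ∀ i, sumBelow (fun i => relRank (s i)) i = sumBelow (fun i => relRank (s' i)) i := by
    have : (fun i => relRank (s i)) = fun i => relRank (s' i) := funext hcong
    rw [this]; exact fun _ => rfl
  exact le_antisymm
    (key hs hs' (fun i => (hcong i).le) hcR hw hw')
    (key hs' hs (fun i => (hcong i).ge) (fun i => (hcR i).symm) hw' hw)

end SigmaLex
theorem relRank_eq_type {β : Type u} [LinearOrder β] [WellFoundedLT β] :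
    relRank ((· < ·) : β → β → Prop) = Ordinal.type ((· < ·) : β → β → Prop) := by
  have hwf : WellFounded ((· < ·) : β → β → Prop) := wellFounded_lt
  rw [relRank_eq_of_wf hwf]
  have hrk : ∀ a : β, rk hwf a = Ordinal.typein ((· < ·) : β → β → Prop) a := by
    intro a
    have h := IsWellFounded.rank_eq_typein ((· < ·) : β → β → Prop)
    exact congrFun h a
  have : (fun a : β => Order.succ (rk hwf a)) =
      fun a : β => Order.succ (Ordinal.typein ((· < ·) : β → β → Prop) a) := by
    funext a; rw [hrk a]
  rw [this]
  refine le_antisymm (Ordinal.iSup_le fun a => Order.succ_le_of_lt (typein_lt_type _ a)) ?_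
  by_contra hc
  rw [not_le] at hc
  obtain ⟨a, ha⟩ := typein_surj ((· < ·) : β → β → Prop) hc
  have hle := Ordinal.le_iSup
    (fun a : β => Order.succ (Ordinal.typein ((· < ·) : β → β → Prop) a)) a
  rw [ha] at hle
  exact (Order.lt_succ _).not_ge hle

theorem relRank_toType (o : Ordinal.{u}) :
    relRank ((· < ·) : o.ToType → o.ToType → Prop) = o := by
  rw [relRank_eq_type, type_toType]

theorem ordSum_eq_relRank {ι : Type u} [LinearOrder ι] [WellFoundedLT ι] (γ : ι → Ordinal.{u}) :
    ordSum γ = relRank (Sigma.Lex ((· < ·) : ι → ι → Prop)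
      (fun i => ((· < ·) : (γ i).ToType → (γ i).ToType → Prop))) := by
  have hwf : WellFounded ((· < ·) : Lex (Σ i, (γ i).ToType) → _ → Prop) :=
    sigmaLex_wf (wellFounded_lt (α := ι)) (fun i => wellFounded_lt)
  rw [ordSum, dif_pos hwf]
  haveI : WellFoundedLT (Lex (Σ i, (γ i).ToType)) := ⟨hwf⟩
  rw [← relRank_eq_type]
  rfl

section SigmaLexBot
variable {ι : Type u} {A : ι → Type u} {s : ∀ i, A i → A i → Prop}

theorem rank_sigmaLexBot (hs : ∀ i, WellFounded (s i))
    (hw : WellFounded (Sigma.Lex (fun _ _ : ι => False) s)) :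
    ∀ i (x : A i), rk hw ⟨i, x⟩ = rk (hs i) x := by
  intro i x
  induction x using (hs i).induction with
  | _ x IH =>
    apply le_antisymm
    · rw [rk_eq hw ⟨i, x⟩]
      apply Ordinal.iSup_le
      rintro ⟨⟨j, y⟩, hp⟩
      cases hp with
      | left _ _ h => exact h.elim
      | right _ _ h =>
        rw [IH y h]
        exact Order.succ_le_of_lt (rk_lt (hs i) h)
    · rw [rk_eq (hs i) x]
      apply Ordinal.iSup_le
      rintro ⟨y, hy⟩
      rw [← IH y hy]
      exact Order.succ_le_of_lt (rk_lt hw (Sigma.Lex.right _ _ hy))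

theorem relRank_sigmaLexBot (hs : ∀ i, WellFounded (s i)) :
    relRank (Sigma.Lex (fun _ _ : ι => False) s) = ⨆ i, relRank (s i) := by
  have hwι : WellFounded (fun _ _ : ι => False) := ⟨fun a => ⟨a, fun b h => h.elim⟩⟩
  have hw := sigmaLex_wf hwι hs
  rw [relRank_eq_of_wf hw]
  apply le_antisymm
  · apply Ordinal.iSup_le
    rintro ⟨i, x⟩
    calc Order.succ (rk hw ⟨i, x⟩) = Order.succ (rk (hs i) x) := by
          rw [rank_sigmaLexBot hs hw i x]
      _ ≤ relRank (s i) := succ_rk_le _ _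
      _ ≤ ⨆ i, relRank (s i) := Ordinal.le_iSup _ i
  · apply Ordinal.iSup_le
    intro i
    rw [relRank_eq_of_wf (hs i)]
    apply Ordinal.iSup_le
    intro x
    rw [← rank_sigmaLexBot hs hw i x]
    exact Ordinal.le_iSup (fun p : Σ i, A i => Order.succ (rk hw p)) ⟨i, x⟩

end SigmaLexBot
section Trees
variable {ι : Type u} [LinearOrder ι] {P : ι → Type u}

/-- generic "pairwise" condition on the sigma type, decreasing in the index -/
def D (C : ∀ i, P i → P i → Prop) (x y : Σ i, P i) : Prop :=
  y.1 < x.1 ∨ ∃ h : y.1 = x.1, C x.1 x.2 (h ▸ y.2)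

variable (C : ∀ i, P i → P i → Prop)

def TS : Set (List (Σ i, P i)) := {l | l ≠ [] ∧ l.Pairwise (D C)}

def Ti (i : ι) : Set (List (P i)) := {l | l ≠ [] ∧ l.Pairwise (C i)}

variable {C}

theorem d_fst {x y : Σ i, P i} (h : D C x y) : y.1 ≤ x.1 := by
  rcases h with h | ⟨h, _⟩
  · exact h.le
  · exact h.le

theorem d_of_c {i : ι} {u v : P i} (h : C i u v) : D C ⟨i, u⟩ ⟨i, v⟩ :=
  Or.inr ⟨rfl, h⟩

theorem c_of_d {i : ι} {u v : P i} (h : D C ⟨i, u⟩ ⟨i, v⟩) : C i u v := by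
  rcases h with h | ⟨h, hc⟩
  · exact absurd h (lt_irrefl i)
  · exact hc

theorem d_cast {i j : ι} (h : i = j) {u : P i} {v : P j} (hc : C j (h ▸ u) v) :
    D C ⟨i, u⟩ ⟨j, v⟩ := by
  subst h; exact d_of_c hc

def blk (i : ι) (l : List (Σ i, P i)) : List (P i) :=
  l.filterMap (fun x => if h : x.1 = i then some (h ▸ x.2) else none)

theorem blk_append (i : ι) (l t : List (Σ i, P i)) :
    blk i (l ++ t) = blk i l ++ blk i t := by unfold blk; exact List.filterMap_append

theorem blk_map_self (i : ι) (c : List (P i)) : blk i (c.map (Sigma.mk i)) = c := by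
  unfold blk
  rw [List.filterMap_map]
  have : (fun x => if h : x.1 = i then some (h ▸ x.2) else none) ∘ Sigma.mk i =
      fun v : P i => some v := by
    funext v
    simp
  rw [this, List.filterMap_some]

theorem blk_nil (i : ι) {l : List (Σ i, P i)} (h : ∀ x ∈ l, x.1 ≠ i) : blk i l = [] := by
  induction l with
  | nil => rfl
  | cons a l ih =>
    unfold blk
    rw [List.filterMap_cons, dif_neg (h a List.mem_cons_self)]
    exact ih (fun x hx => h x (List.mem_cons_of_mem a hx))

theorem mem_blk {i : ι} {l : List (Σ i, P i)} {x : Σ i, P i} (hx : x ∈ l) (h : x.1 = i) :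
    (h ▸ x.2) ∈ blk i l :=
  List.mem_filterMap.2 ⟨x, hx, by rw [dif_pos h]⟩

theorem blk_pairwise {i : ι} {l : List (Σ i, P i)} (hp : l.Pairwise (D C)) :
    (blk i l).Pairwise (C i) := by
  refine List.Pairwise.filterMap _ ?_ hp
  rintro ⟨xi, xu⟩ ⟨yi, yv⟩ hd u hu v hv
  simp only [Option.mem_def] at hu hv
  by_cases hx : xi = i
  · rw [dif_pos hx] at hu
    by_cases hy : yi = i
    · rw [dif_pos hy] at hv
      subst hx; subst hy
      cases hu; cases hv
      exact c_of_d hd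
    · rw [dif_neg hy] at hv; exact absurd hv (by simp)
  · rw [dif_neg hx] at hu; exact absurd hu (by simp)

theorem blk_ne_nil {i : ι} {l : List (Σ i, P i)} {x : Σ i, P i} (hx : x ∈ l) (h : x.1 = i) :
    blk i l ≠ [] :=
  List.ne_nil_of_mem (mem_blk hx h)

theorem last_min {l : List (Σ i, P i)} (hp : l.Pairwise (D C)) (hl : l ≠ []) :
    ∀ x ∈ l, (l.getLast hl).1 ≤ x.1 := by
  intro x hx
  obtain ⟨k, hk, rfl⟩ := List.mem_iff_getElem.1 hx
  rw [List.getLast_eq_getElem]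
  rcases lt_trichotomy k (l.length - 1) with h | h | h
  · exact d_fst (List.pairwise_iff_getElem.1 hp k (l.length - 1) hk (by omega) h)
  · subst h; exact le_rfl
  · omega

end Trees
section Trees2
variable {ι : Type u} [LinearOrder ι] {P : ι → Type u} {C : ∀ i, P i → P i → Prop}

theorem ne_append {α' : Type u} {l t : List α'} (ht : t ≠ []) : l ≠ l ++ t := by
  intro h
  have := congrArg List.length h
  simp only [List.length_append] at this
  exact ht (List.length_eq_zero_iff.1 (by omega))

theorem fst_getLast_map {i : ι} {c : List (P i)} (hc : c.map (Sigma.mk i) ≠ []) :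
    ((c.map (Sigma.mk i)).getLast hc).1 = i := by
  obtain ⟨v, _, he⟩ := List.mem_map.1 (List.getLast_mem hc)
  rw [← he]

theorem map_ne_nil' {i : ι} {c : List (P i)} (hc : c ≠ []) : c.map (Sigma.mk i) ≠ [] := by
  intro h
  exact hc (by simpa using h)

variable (C)

def F (a : ↥(TS C)) : Σ i, ↥(Ti C i) :=
  ⟨(a.1.getLast a.2.1).1,
   ⟨blk (a.1.getLast a.2.1).1 a.1,
    ⟨blk_ne_nil (List.getLast_mem a.2.1) rfl, blk_pairwise a.2.2⟩⟩⟩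

variable {C}

theorem lex_right_heq {i' i : ι} {b' : ↥(Ti C i')} {b : ↥(Ti C i)} (h : i' = i)
    {c : List (P i)} (hH : HEq b'.1 c) (h1 : b.1 <+: c) (h2 : b.1 ≠ c) :
    Sigma.Lex (· < ·) (fun i => extRel (Ti C i)) ⟨i', b'⟩ ⟨i, b⟩ := by
  subst h
  obtain rfl : b'.1 = c := eq_of_heq hH
  exact Sigma.Lex.right _ _ ⟨h1, h2⟩

theorem sigma_sub_ext {i j : ι} {b : ↥(Ti C i)} {c : ↥(Ti C j)} (h : i = j)
    (hb : HEq b.1 c.1) : (⟨i, b⟩ : Σ k, ↥(Ti C k)) = ⟨j, c⟩ := by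
  subst h
  obtain ⟨b, hb'⟩ := b
  obtain ⟨c, hc'⟩ := c
  cases eq_of_heq hb
  rfl

theorem F_lex {a a' : ↥(TS C)} (h : extRel (TS C) a' a) :
    Sigma.Lex (· < ·) (fun i => extRel (Ti C i)) (F C a') (F C a) := by
  obtain ⟨l, hl⟩ := a
  obtain ⟨l', hl'⟩ := a'
  obtain ⟨hpre, hne⟩ := h
  obtain ⟨t, rfl⟩ := hpre
  have ht : t ≠ [] := by rintro rfl; simp at hne
  have hlast : (l ++ t).getLast (hl'.1) = t.getLast ht := List.getLast_append_right ht
  have hcross : ∀ x ∈ l, ∀ b ∈ t, D C x b := (List.pairwise_append.1 hl'.2).2.2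
  have hle : (t.getLast ht).1 ≤ (l.getLast hl.1).1 :=
    d_fst (hcross _ (List.getLast_mem hl.1) _ (List.getLast_mem ht))
  have hbt : blk ((l).getLast hl.1).1 t ≠ [] → True := fun _ => trivial
  rcases lt_or_eq_of_le hle with hlt | heq
  · exact Sigma.Lex.left _ _ (by rw [hlast]; exact hlt)
  · have hidx : ((l ++ t).getLast hl'.1).1 = (l.getLast hl.1).1 := by rw [hlast]; exact heq
    refine lex_right_heq hidx (c := blk ((l).getLast hl.1).1 (l ++ t)) ?_ ?_ ?_
    · show HEq (blk ((l ++ t).getLast hl'.1).1 (l ++ t)) (blk (l.getLast hl.1).1 (l ++ t))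
      rw [hidx]
    · rw [blk_append]; exact ⟨_, rfl⟩
    · have hbt : blk ((l).getLast hl.1).1 t ≠ [] :=
        blk_ne_nil (List.getLast_mem ht) heq
      rw [blk_append]
      exact ne_append hbt

theorem F_pred_surj (a : ↥(TS C)) (q : Σ i, ↥(Ti C i))
    (hq : Sigma.Lex (· < ·) (fun i => extRel (Ti C i)) q (F C a)) :
    ∃ a', extRel (TS C) a' a ∧ F C a' = q := by
  obtain ⟨l, hl⟩ := a
  obtain ⟨j, c⟩ := q
  rw [Sigma.lex_iff] at hq
  dsimp only at hq
  rcases hq with hji | ⟨heq, hext⟩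
  · -- j < last index of l
    have hji' : j < (l.getLast hl.1).1 := hji
    have hmap : c.1.map (Sigma.mk j) ≠ [] := map_ne_nil' c.2.1
    have hmem : (l ++ c.1.map (Sigma.mk j)) ∈ TS C := by
      refine ⟨by simp [hl.1], List.pairwise_append.2 ⟨hl.2, ?_, ?_⟩⟩
      · exact List.pairwise_map.2 (c.2.2.imp fun h => d_of_c h)
      · intro x hx y hy
        obtain ⟨v, _, rfl⟩ := List.mem_map.1 hy
        exact Or.inl (lt_of_lt_of_le hji' (last_min hl.2 hl.1 x hx))
    refine ⟨⟨_, hmem⟩, ⟨⟨_, rfl⟩, ne_append hmap⟩, ?_⟩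
    refine sigma_sub_ext ?_ ?_
    · show ((l ++ c.1.map (Sigma.mk j)).getLast _).1 = j
      rw [List.getLast_append_right hmap]
      exact fst_getLast_map hmap
    · show HEq (blk ((l ++ c.1.map (Sigma.mk j)).getLast _).1 (l ++ c.1.map (Sigma.mk j))) c.1
      rw [List.getLast_append_right hmap, fst_getLast_map hmap, blk_append,
        blk_nil j (fun x hx h => absurd (h ▸ last_min hl.2 hl.1 x hx) (not_le.2 hji')),
        blk_map_self]
      rfl
  · -- same index case
    subst heq
    have hext' : extRel (Ti C (l.getLast hl.1).1) c (F C ⟨l, hl⟩).2 := hext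
    obtain ⟨hpre, hne⟩ := hext'
    obtain ⟨rest, hrest⟩ := hpre
    have hrest' : rest ≠ [] := by rintro rfl; exact hne (by simpa using hrest)
    have hmap : rest.map (Sigma.mk (l.getLast hl.1).1) ≠ [] := map_ne_nil' hrest'
    have hrest2 : blk (l.getLast hl.1).1 l ++ rest = c.1 := hrest
    have hcp : (blk (l.getLast hl.1).1 l ++ rest).Pairwise (C (l.getLast hl.1).1) := by
      rw [hrest2]; exact c.2.2
    have hcross := (List.pairwise_append.1 hcp).2.2
    have hmem : (l ++ rest.map (Sigma.mk (l.getLast hl.1).1)) ∈ TS C := by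
      refine ⟨by simp [hl.1], List.pairwise_append.2
        ⟨hl.2, List.pairwise_map.2 ((List.pairwise_append.1 hcp).2.1.imp fun h => d_of_c h), ?_⟩⟩
      intro x hx y hy
      obtain ⟨v, hv, rfl⟩ := List.mem_map.1 hy
      rcases lt_or_eq_of_le (last_min hl.2 hl.1 x hx) with hlt | heq2
      · exact Or.inl hlt
      · obtain ⟨xi, xu⟩ := x
        have hxi : xi = (l.getLast hl.1).1 := heq2.symm
        have hu : (hxi ▸ xu) ∈ blk (l.getLast hl.1).1 l := mem_blk hx hxi
        exact d_cast hxi (hcross _ hu _ hv)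
    refine ⟨⟨_, hmem⟩, ⟨⟨_, rfl⟩, ne_append hmap⟩, ?_⟩
    refine sigma_sub_ext ?_ ?_
    · show ((l ++ rest.map (Sigma.mk (l.getLast hl.1).1)).getLast _).1 = (l.getLast hl.1).1
      rw [List.getLast_append_right hmap]
      exact fst_getLast_map hmap
    · show HEq (blk ((l ++ rest.map (Sigma.mk (l.getLast hl.1).1)).getLast _).1
        (l ++ rest.map (Sigma.mk (l.getLast hl.1).1))) c.1
      rw [List.getLast_append_right hmap, fst_getLast_map hmap, blk_append, blk_map_self, hrest2]
      rfl

theorem F_surj : Function.Surjective (F C) := by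
  rintro ⟨i, c⟩
  have hmap : c.1.map (Sigma.mk i) ≠ [] := map_ne_nil' c.2.1
  have hmem : c.1.map (Sigma.mk i) ∈ TS C :=
    ⟨hmap, List.pairwise_map.2 (c.2.2.imp fun h => d_of_c h)⟩
  refine ⟨⟨_, hmem⟩, sigma_sub_ext ?_ ?_⟩
  · exact fst_getLast_map hmap
  · show HEq (blk ((c.1.map (Sigma.mk i)).getLast _).1 (c.1.map (Sigma.mk i))) c.1
    rw [fst_getLast_map hmap, blk_map_self]

end Trees2
instance extRel_strictOrder {α : Type u} (T : Set (List α)) : IsStrictOrder T (extRel T) where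
  irrefl := fun a h => h.2 rfl
  trans := by
    rintro a b c ⟨hab, hab'⟩ ⟨hbc, hbc'⟩
    refine ⟨hbc.trans hab, fun h => ?_⟩
    have h1 := hbc.length_le
    have h2 := hab.length_le
    rw [h] at h1
    exact hab' (hab.eq_of_length (le_antisymm h2 h1))

theorem wf_extRel_of_no_chain {Q : Type u} {cond : Q → Q → Prop}
    (h : ∀ f : ℕ → Q, ∃ m n, m < n ∧ ¬ cond (f m) (f n)) :
    WellFounded (extRel {l : List Q | l ≠ [] ∧ l.Pairwise cond}) := by
  set T := {l : List Q | l ≠ [] ∧ l.Pairwise cond} with hT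
  refine RelEmbedding.wellFounded_iff_isEmpty.2 ⟨fun g => ?_⟩
  have hstep : ∀ n : ℕ, (g n).1 <+: (g (n + 1)).1 ∧ (g n).1 ≠ (g (n + 1)).1 := by
    intro n
    exact g.map_rel_iff.2 (Nat.lt_succ_self n)
  have hlenstep : ∀ n : ℕ, (g n).1.length < (g (n + 1)).1.length := by
    intro n
    obtain ⟨hp, hne⟩ := hstep n
    rcases lt_or_eq_of_le hp.length_le with h | h
    · exact h
    · exact absurd (hp.eq_of_length h) hne
  have hlen : ∀ n : ℕ, n < (g n).1.length := by
    intro n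
    induction n with
    | zero => exact List.length_pos_iff.2 (g 0).2.1
    | succ n ih => exact lt_of_le_of_lt ih (hlenstep n)
  have hpre : ∀ m n : ℕ, m ≤ n → (g m).1 <+: (g n).1 := by
    intro m n hmn
    induction n, hmn using Nat.le_induction with
    | base => exact List.prefix_refl _
    | succ n hmn ih => exact ih.trans (hstep n).1
  let f : ℕ → Q := fun n => (g (n + 1)).1[n]'(by have := hlen (n + 1); omega)
  obtain ⟨m, n, hmn, hnc⟩ := h f
  apply hnc
  have hbm : m < (g (m + 1)).1.length := by have := hlen (m + 1); omega
  have hbn2 : m < (g (n + 1)).1.length :=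
    lt_of_lt_of_le hbm (hpre (m + 1) (n + 1) (by omega)).length_le
  have hbn : n < (g (n + 1)).1.length := by have := hlen (n + 1); omega
  have hfm : f m = (g (n + 1)).1[m]'hbn2 := (hpre (m + 1) (n + 1) (by omega)).getElem hbm
  have hp := List.pairwise_iff_getElem.1 (g (n + 1)).2.2 m n hbn2 hbn hmn
  show cond (f m) (f n)
  rw [hfm]
  exact hp
section WidthTrees
variable {ι : Type u} [LinearOrder ι] {P : ι → Type u}

def E (C : ∀ i, P i → P i → Prop) (x y : Σ i, P i) : Prop :=
  ∃ h : y.1 = x.1, C x.1 x.2 (h ▸ y.2)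

def TSW (C : ∀ i, P i → P i → Prop) : Set (List (Σ i, P i)) := {l | l ≠ [] ∧ l.Pairwise (E C)}
variable {C : ∀ i, P i → P i → Prop}
-- width-specific
theorem e_fst {x y : Σ i, P i} (h : E C x y) : y.1 = x.1 := h.1

theorem c_of_e {i : ι} {u v : P i} (h : E C ⟨i, u⟩ ⟨i, v⟩) : C i u v := by
  obtain ⟨h', hc⟩ := h
  exact hc

theorem e_of_c {i : ι} {u v : P i} (h : C i u v) : E C ⟨i, u⟩ ⟨i, v⟩ := ⟨rfl, h⟩

theorem e_cast {i j : ι} (h : i = j) {u : P i} {v : P j} (hc : C j (h ▸ u) v) :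
    E C ⟨i, u⟩ ⟨j, v⟩ := by
  subst h; exact ⟨rfl, hc⟩

theorem blk_pairwiseW {i : ι} {l : List (Σ i, P i)} (hp : l.Pairwise (E C)) :
    (blk i l).Pairwise (C i) := by
  refine List.Pairwise.filterMap _ ?_ hp
  rintro ⟨xi, xu⟩ ⟨yi, yv⟩ hd u hu v hv
  simp only [Option.mem_def] at hu hv
  by_cases hx : xi = i
  · rw [dif_pos hx] at hu
    by_cases hy : yi = i
    · rw [dif_pos hy] at hv
      subst hx; subst hy
      cases hu; cases hv
      exact c_of_e hd
    · rw [dif_neg hy] at hv; exact absurd hv (by simp)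
  · rw [dif_neg hx] at hu; exact absurd hu (by simp)

theorem lastW_eq {l : List (Σ i, P i)} (hp : l.Pairwise (E C)) (hl : l ≠ []) :
    ∀ x ∈ l, x.1 = (l.getLast hl).1 := by
  intro x hx
  obtain ⟨k, hk, rfl⟩ := List.mem_iff_getElem.1 hx
  rw [List.getLast_eq_getElem]
  rcases lt_trichotomy k (l.length - 1) with h | h | h
  · exact (e_fst (List.pairwise_iff_getElem.1 hp k (l.length - 1) hk (by omega) h)).symm
  · subst h; rfl
  · omega

def GW (a : ↥(TSW C)) : Σ i, ↥(Ti C i) :=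
  ⟨(a.1.getLast a.2.1).1,
   ⟨blk (a.1.getLast a.2.1).1 a.1,
    ⟨blk_ne_nil (List.getLast_mem a.2.1) rfl, blk_pairwiseW a.2.2⟩⟩⟩

theorem lex_right_heqW {i' i : ι} {b' : ↥(Ti C i')} {b : ↥(Ti C i)} (h : i' = i)
    {c : List (P i)} (hH : HEq b'.1 c) (h1 : b.1 <+: c) (h2 : b.1 ≠ c) :
    Sigma.Lex (fun _ _ => False) (fun i => extRel (Ti C i)) ⟨i', b'⟩ ⟨i, b⟩ := by
  subst h
  obtain rfl : b'.1 = c := eq_of_heq hH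
  exact Sigma.Lex.right _ _ ⟨h1, h2⟩

theorem sigma_sub_extW {i j : ι} {b : ↥(Ti C i)} {c : ↥(Ti C j)} (h : i = j)
    (hb : HEq b.1 c.1) : (⟨i, b⟩ : Σ k, ↥(Ti C k)) = ⟨j, c⟩ := by
  subst h
  obtain ⟨b, hb'⟩ := b
  obtain ⟨c, hc'⟩ := c
  cases eq_of_heq hb
  rfl

theorem GW_lex {a a' : ↥(TSW C)} (h : extRel (TSW C) a' a) :
    Sigma.Lex (fun _ _ => False) (fun i => extRel (Ti C i)) (GW a') (GW a) := by
  obtain ⟨l, hl⟩ := a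
  obtain ⟨l', hl'⟩ := a'
  obtain ⟨hpre, hne⟩ := h
  obtain ⟨t, rfl⟩ := hpre
  have ht : t ≠ [] := by rintro rfl; simp at hne
  have hlast : (l ++ t).getLast (hl'.1) = t.getLast ht := List.getLast_append_right ht
  have hmem : l.getLast hl.1 ∈ l ++ t := List.mem_append_left _ (List.getLast_mem hl.1)
  have heq0 : (l.getLast hl.1).1 = ((l ++ t).getLast hl'.1).1 := lastW_eq hl'.2 hl'.1 _ hmem
  have hidx : ((l ++ t).getLast hl'.1).1 = (l.getLast hl.1).1 := heq0.symm
  have htlast : (t.getLast ht).1 = (l.getLast hl.1).1 := by rw [← hlast]; exact hidx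
  refine lex_right_heqW hidx (c := blk ((l).getLast hl.1).1 (l ++ t)) ?_ ?_ ?_
  · show HEq (blk ((l ++ t).getLast hl'.1).1 (l ++ t)) (blk (l.getLast hl.1).1 (l ++ t))
    rw [hidx]
  · rw [blk_append]; exact ⟨_, rfl⟩
  · have hbt : blk ((l).getLast hl.1).1 t ≠ [] := blk_ne_nil (List.getLast_mem ht) htlast
    rw [blk_append]
    exact ne_append hbt

theorem GW_pred_surj (a : ↥(TSW C)) (q : Σ i, ↥(Ti C i))
    (hq : Sigma.Lex (fun _ _ => False) (fun i => extRel (Ti C i)) q (GW a)) :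
    ∃ a', extRel (TSW C) a' a ∧ GW a' = q := by
  obtain ⟨l, hl⟩ := a
  obtain ⟨j, c⟩ := q
  rw [Sigma.lex_iff] at hq
  dsimp only at hq
  rcases hq with hji | ⟨heq, hext⟩
  · exact absurd hji id
  · subst heq
    have hext' : extRel (Ti C (l.getLast hl.1).1) c (GW ⟨l, hl⟩).2 := hext
    obtain ⟨hpre, hne⟩ := hext'
    obtain ⟨rest, hrest⟩ := hpre
    have hrest2 : blk (l.getLast hl.1).1 l ++ rest = c.1 := hrest
    have hrest' : rest ≠ [] := by
      rintro rfl
      exact hne (by simpa using hrest)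
    have hmap : rest.map (Sigma.mk (l.getLast hl.1).1) ≠ [] := map_ne_nil' hrest'
    have hcp : (blk (l.getLast hl.1).1 l ++ rest).Pairwise (C (l.getLast hl.1).1) := by
      rw [hrest2]; exact c.2.2
    have hcross := (List.pairwise_append.1 hcp).2.2
    have hmem : (l ++ rest.map (Sigma.mk (l.getLast hl.1).1)) ∈ TSW C := by
      refine ⟨by simp [hl.1], List.pairwise_append.2
        ⟨hl.2, List.pairwise_map.2 ((List.pairwise_append.1 hcp).2.1.imp fun h => e_of_c h), ?_⟩⟩
      intro x hx y hy
      obtain ⟨v, hv, rfl⟩ := List.mem_map.1 hy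
      obtain ⟨xi, xu⟩ := x
      have hxi : xi = (l.getLast hl.1).1 := lastW_eq hl.2 hl.1 _ hx
      have hu : (hxi ▸ xu) ∈ blk (l.getLast hl.1).1 l := mem_blk hx hxi
      exact e_cast hxi (hcross _ hu _ hv)
    refine ⟨⟨_, hmem⟩, ⟨⟨_, rfl⟩, ne_append hmap⟩, ?_⟩
    refine sigma_sub_extW ?_ ?_
    · show ((l ++ rest.map (Sigma.mk (l.getLast hl.1).1)).getLast _).1 = (l.getLast hl.1).1
      rw [List.getLast_append_right hmap]
      exact fst_getLast_map hmap
    · show HEq (blk ((l ++ rest.map (Sigma.mk (l.getLast hl.1).1)).getLast _).1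
        (l ++ rest.map (Sigma.mk (l.getLast hl.1).1))) c.1
      rw [List.getLast_append_right hmap, fst_getLast_map hmap, blk_append, blk_map_self, hrest2]
      rfl

theorem GW_surj : Function.Surjective (GW (C := C)) := by
  rintro ⟨i, c⟩
  have hmap : c.1.map (Sigma.mk i) ≠ [] := map_ne_nil' c.2.1
  have hmem : c.1.map (Sigma.mk i) ∈ TSW C :=
    ⟨hmap, List.pairwise_map.2 (c.2.2.imp fun h => e_of_c h)⟩
  refine ⟨⟨_, hmem⟩, sigma_sub_extW ?_ ?_⟩
  · exact fst_getLast_map hmap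
  · show HEq (blk ((c.1.map (Sigma.mk i)).getLast _).1 (c.1.map (Sigma.mk i))) c.1
    rw [fst_getLast_map hmap, blk_map_self]

section Orders
variable [∀ i, PartialOrder (P i)]

theorem le_lex_iff' {i j : ι} {u : P i} {v : P j} :
    @LE.le (Lex (Σ i, P i)) Sigma.Lex.LE ⟨i, u⟩ ⟨j, v⟩ ↔
      (i < j ∨ ∃ h : i = j, (h ▸ u : P j) ≤ v) :=
  Iff.trans (show _ ↔ Sigma.Lex ((· < ·) : ι → ι → Prop)
    (fun k => ((· ≤ ·) : P k → P k → Prop)) ⟨i, u⟩ ⟨j, v⟩ from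
      ⟨fun h => h, fun h => h⟩) Sigma.lex_iff

theorem lt_lex_iff' {i j : ι} {u : P i} {v : P j} :
    @LT.lt (Lex (Σ i, P i)) Sigma.Lex.LT ⟨i, u⟩ ⟨j, v⟩ ↔
      (i < j ∨ ∃ h : i = j, (h ▸ u : P j) < v) :=
  Iff.trans (show _ ↔ Sigma.Lex ((· < ·) : ι → ι → Prop)
    (fun k => ((· < ·) : P k → P k → Prop)) ⟨i, u⟩ ⟨j, v⟩ from
      ⟨fun h => h, fun h => h⟩) Sigma.lex_iff

theorem not_le_lex_iff {x y : Lex (Σ i, P i)} :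
    (¬ x ≤ y) ↔ D (fun i (u v : P i) => ¬ u ≤ v) x y := by
  obtain ⟨i, u⟩ := x
  obtain ⟨j, v⟩ := y
  rw [show (@LE.le (Lex (Σ i, P i)) Sigma.Lex.LE ⟨i, u⟩ ⟨j, v⟩) ↔
      (i < j ∨ ∃ h : i = j, (h ▸ u : P j) ≤ v) from le_lex_iff']
  show _ ↔ (j < i ∨ ∃ h : j = i, ¬ u ≤ (h ▸ v))
  constructor
  · intro h
    have h1 : ¬ i < j := fun hh => h (Or.inl hh)
    rcases lt_or_eq_of_le (le_of_not_gt h1) with hlt | heq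
    · exact Or.inl hlt
    · subst heq
      exact Or.inr ⟨rfl, fun hle => h (Or.inr ⟨rfl, hle⟩)⟩
  · rintro (hlt | ⟨heq, hc⟩) (h' | ⟨h', hle⟩)
    · exact absurd h' (asymm hlt)
    · exact absurd (h' ▸ hlt) (lt_irrefl j)
    · subst heq
      exact absurd h' (lt_irrefl _)
    · subst heq
      exact hc hle

theorem lt_lex_iff {x y : Lex (Σ i, P i)} :
    (y < x) ↔ D (fun i (u v : P i) => v < u) x y := by
  obtain ⟨i, u⟩ := x
  obtain ⟨j, v⟩ := y
  rw [show (@LT.lt (Lex (Σ i, P i)) Sigma.Lex.LT ⟨j, v⟩ ⟨i, u⟩) ↔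
      (j < i ∨ ∃ h : j = i, (h ▸ v : P i) < u) from lt_lex_iff']
  show _ ↔ (j < i ∨ ∃ h : j = i, (h ▸ v) < u)
  exact Iff.rfl

theorem incomp_lex_iff {x y : Lex (Σ i, P i)} :
    ((¬ x ≤ y) ∧ ¬ y ≤ x) ↔ E (fun i (u v : P i) => ¬ u ≤ v ∧ ¬ v ≤ u) x y := by
  obtain ⟨i, u⟩ := x
  obtain ⟨j, v⟩ := y
  rw [show (@LE.le (Lex (Σ i, P i)) Sigma.Lex.LE ⟨i, u⟩ ⟨j, v⟩) ↔
      (i < j ∨ ∃ h : i = j, (h ▸ u : P j) ≤ v) from le_lex_iff',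
    show (@LE.le (Lex (Σ i, P i)) Sigma.Lex.LE ⟨j, v⟩ ⟨i, u⟩) ↔
      (j < i ∨ ∃ h : j = i, (h ▸ v : P i) ≤ u) from le_lex_iff']
  show _ ↔ (∃ h : j = i, ¬ u ≤ (h ▸ v) ∧ ¬ (h ▸ v) ≤ u)
  constructor
  · rintro ⟨h1, h2⟩
    have hij : ¬ i < j := fun hh => h1 (Or.inl hh)
    have hji : ¬ j < i := fun hh => h2 (Or.inl hh)
    obtain heq : j = i := le_antisymm (le_of_not_gt hij) (le_of_not_gt hji)
    subst heq
    exact ⟨rfl, fun hle => h1 (Or.inr ⟨rfl, hle⟩), fun hle => h2 (Or.inr ⟨rfl, hle⟩)⟩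
  · rintro ⟨heq, hc1, hc2⟩
    subst heq
    constructor
    · rintro (h' | ⟨h', hle⟩)
      · exact absurd h' (lt_irrefl _)
      · exact hc1 hle
    · rintro (h' | ⟨h', hle⟩)
      · exact absurd h' (lt_irrefl _)
      · exact hc2 hle

theorem badSeqs_eq :
    BadSeqs (Lex (Σ i, P i)) = TS (fun i (u v : P i) => ¬ u ≤ v) := by
  ext l
  exact and_congr Iff.rfl
    ⟨fun h => h.imp fun hxy => not_le_lex_iff.1 hxy,
     fun h => h.imp fun hxy => not_le_lex_iff.2 hxy⟩

theorem decSeqs_eq :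
    DecSeqs (Lex (Σ i, P i)) = TS (fun i (u v : P i) => v < u) := by
  ext l
  exact and_congr Iff.rfl
    ⟨fun h => h.imp fun hxy => lt_lex_iff.1 hxy,
     fun h => h.imp fun hxy => lt_lex_iff.2 hxy⟩

theorem incSeqs_eq :
    IncSeqs (Lex (Σ i, P i)) = TSW (fun i (u v : P i) => ¬ u ≤ v ∧ ¬ v ≤ u) := by
  ext l
  exact and_congr Iff.rfl
    ⟨fun h => h.imp fun hxy => incomp_lex_iff.1 hxy,
     fun h => h.imp fun hxy => incomp_lex_iff.2 hxy⟩

theorem le_lex_of_fst {x y : Lex (Σ i, P i)} (h : x.1 < y.1) : x ≤ y := by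
  obtain ⟨i, u⟩ := x
  obtain ⟨j, v⟩ := y
  exact le_lex_iff'.2 (Or.inl h)

theorem le_lex_of_snd {i0 : ι} {x y : Lex (Σ i, P i)} (hx : x.1 = i0) (hy : y.1 = i0)
    (h : (hx ▸ x.2 : P i0) ≤ (hy ▸ y.2)) : x ≤ y := by
  obtain ⟨xi, xu⟩ := x
  obtain ⟨yi, yv⟩ := y
  dsimp only at hx hy
  revert h
  subst hx
  subst hy
  intro h
  exact le_lex_iff'.2 (Or.inr ⟨rfl, h⟩)

theorem isWQO_lex [WellFoundedLT ι] (hwqo : ∀ i, IsWQO (P i)) :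
    IsWQO (Lex (Σ i, P i)) := by
  intro f
  have hne : (Set.range fun n => (f n).1).Nonempty := ⟨_, ⟨0, rfl⟩⟩
  obtain ⟨i0, ⟨n0, hn0⟩, hmin⟩ := (wellFounded_lt (α := ι)).has_min _ hne
  by_cases hcase : ∃ n, n > n0 ∧ i0 < (f n).1
  · obtain ⟨n, hn, hlt⟩ := hcase
    have hn0' : (f n0).1 = i0 := hn0
    refine ⟨n0, n, hn, le_lex_of_fst ?_⟩
    rw [hn0']
    exact hlt
  · push_neg at hcase
    have hall : ∀ n, n > n0 → (f n : Σ i, P i).1 = i0 := by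
      intro n hn
      rcases lt_or_eq_of_le (hcase n hn) with hlt | heq
      · exact absurd hlt (hmin _ ⟨n, rfl⟩)
      · exact heq
    let g : ℕ → P i0 := fun k => (hall (n0 + k + 1) (by omega)) ▸ (f (n0 + k + 1)).2
    obtain ⟨a, b, hab, hle⟩ := hwqo i0 g
    exact ⟨n0 + a + 1, n0 + b + 1, by omega,
      le_lex_of_snd (hall _ (by omega)) (hall _ (by omega)) hle⟩

end Orders
end WidthTrees

end S13

/-- A lexicographic sum of WQOs along an ordinal is a WQO; its
maximal order type and height are the ordinal sums of those of the summands, and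
its width is their supremum. -/
theorem stmt_13 {ι : Type u} [LinearOrder ι] [WellFoundedLT ι]
    (P : ι → Type u) [∀ i, PartialOrder (P i)] (hwqo : ∀ i, IsWQO (P i)) :
    IsWQO (Lex (Σ i, P i)) ∧
    mot (Lex (Σ i, P i)) = ordSum (fun i => mot (P i)) ∧
    height (Lex (Σ i, P i)) = ordSum (fun i => height (P i)) ∧
    width (Lex (Σ i, P i)) = ⨆ i, width (P i) := by
  refine ⟨S13.isWQO_lex hwqo, ?_, ?_, ?_⟩
  · -- mot
    have hwf : ∀ i, WellFounded (extRel (S13.Ti (fun i (u v : P i) => ¬ u ≤ v) i)) := by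
      intro i
      exact S13.wf_extRel_of_no_chain (fun f => by
        obtain ⟨m, n, hmn, hle⟩ := hwqo i f
        exact ⟨m, n, hmn, not_not_intro hle⟩)
    have h1 : mot (Lex (Σ i, P i)) =
        relRank (extRel (S13.TS (fun i (u v : P i) => ¬ u ≤ v))) := by
      show relRank (extRel (BadSeqs (Lex (Σ i, P i)))) = _
      rw [S13.badSeqs_eq]
      rfl
    have h2 : relRank (extRel (S13.TS (fun i (u v : P i) => ¬ u ≤ v))) =
        relRank (Sigma.Lex ((· < ·) : ι → ι → Prop)
          (fun i => extRel (S13.Ti (fun i (u v : P i) => ¬ u ≤ v) i))) :=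
      S13.relRank_transport (S13.sigmaLex_wf wellFounded_lt hwf) (S13.F _)
        (fun a a' h => S13.F_lex h) S13.F_pred_surj S13.F_surj
    have h3 : relRank (Sigma.Lex ((· < ·) : ι → ι → Prop)
          (fun i => extRel (S13.Ti (fun i (u v : P i) => ¬ u ≤ v) i))) =
        relRank (Sigma.Lex ((· < ·) : ι → ι → Prop)
          (fun i => ((· < ·) : (mot (P i)).ToType → (mot (P i)).ToType → Prop))) :=
      S13.relRank_sigmaLex_congr hwf (fun i => wellFounded_lt)
        (fun i => (S13.relRank_toType (mot (P i))).symm)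
        (S13.sigmaLex_wf wellFounded_lt hwf)
        (S13.sigmaLex_wf wellFounded_lt (fun i => wellFounded_lt))
    rw [h1, h2, h3]
    exact (S13.ordSum_eq_relRank _).symm
  · -- height
    have hwf : ∀ i, WellFounded (extRel (S13.Ti (fun i (u v : P i) => v < u) i)) := by
      intro i
      exact S13.wf_extRel_of_no_chain (fun f => by
        obtain ⟨m, n, hmn, hle⟩ := hwqo i f
        exact ⟨m, n, hmn, hle.not_gt⟩)
    have h1 : height (Lex (Σ i, P i)) =
        relRank (extRel (S13.TS (fun i (u v : P i) => v < u))) := by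
      show relRank (extRel (DecSeqs (Lex (Σ i, P i)))) = _
      rw [S13.decSeqs_eq]
      rfl
    have h2 : relRank (extRel (S13.TS (fun i (u v : P i) => v < u))) =
        relRank (Sigma.Lex ((· < ·) : ι → ι → Prop)
          (fun i => extRel (S13.Ti (fun i (u v : P i) => v < u) i))) :=
      S13.relRank_transport (S13.sigmaLex_wf wellFounded_lt hwf) (S13.F _)
        (fun a a' h => S13.F_lex h) S13.F_pred_surj S13.F_surj
    have h3 : relRank (Sigma.Lex ((· < ·) : ι → ι → Prop)
          (fun i => extRel (S13.Ti (fun i (u v : P i) => v < u) i))) =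
        relRank (Sigma.Lex ((· < ·) : ι → ι → Prop)
          (fun i => ((· < ·) : (height (P i)).ToType → (height (P i)).ToType → Prop))) :=
      S13.relRank_sigmaLex_congr hwf (fun i => wellFounded_lt)
        (fun i => (S13.relRank_toType (height (P i))).symm)
        (S13.sigmaLex_wf wellFounded_lt hwf)
        (S13.sigmaLex_wf wellFounded_lt (fun i => wellFounded_lt))
    rw [h1, h2, h3]
    exact (S13.ordSum_eq_relRank _).symm
  · -- width
    have hwf : ∀ i, WellFounded (extRel (S13.Ti (fun i (u v : P i) => ¬ u ≤ v ∧ ¬ v ≤ u) i)) := by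
      intro i
      exact S13.wf_extRel_of_no_chain (fun f => by
        obtain ⟨m, n, hmn, hle⟩ := hwqo i f
        exact ⟨m, n, hmn, fun hc => hc.1 hle⟩)
    have hwfF : WellFounded (fun _ _ : ι => False) := ⟨fun a => ⟨a, fun b h => h.elim⟩⟩
    have h1 : width (Lex (Σ i, P i)) =
        relRank (extRel (S13.TSW (fun i (u v : P i) => ¬ u ≤ v ∧ ¬ v ≤ u))) := by
      show relRank (extRel (IncSeqs (Lex (Σ i, P i)))) = _
      rw [S13.incSeqs_eq]
      rfl
    have h2 : relRank (extRel (S13.TSW (fun i (u v : P i) => ¬ u ≤ v ∧ ¬ v ≤ u))) =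
        relRank (Sigma.Lex (fun _ _ : ι => False)
          (fun i => extRel (S13.Ti (fun i (u v : P i) => ¬ u ≤ v ∧ ¬ v ≤ u) i))) :=
      S13.relRank_transport (S13.sigmaLex_wf hwfF hwf) S13.GW
        (fun a a' h => S13.GW_lex h) S13.GW_pred_surj S13.GW_surj
    rw [h1, h2, S13.relRank_sigmaLexBot hwf]
    rfl
end

section
/- For any ordinals α, β with α infinite, w(α × (β+1)) = w(α × β) + 1, where α × β carries the componentwise (Cartesian product) order. -/
universe u

open Ordinal

/-!
The top row `α × {β}` of `α × (β + 1)` is a chain, so an antichain sequence meets it at most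
once. Ranking an antichain sequence of `α × (β + 1)` by the rank of its trace on `α × β`, plus one
as long as it has not met the top row, bounds the width by `w(α × β) + 1`. Conversely, for `α`
infinite, `v ↦ 1 + v` embeds `α` into itself while missing `0`, so `(0, β)` is incomparable to a
copy of `α × β` inside `α × (β + 1)`; prefixing `(0, β)` to the antichain sequences of this copy
places the whole tree of `α × β` strictly below the node `[(0, β)]`.
-/

section RelRank

variable {γ : Type u} {r : γ → γ → Prop}

theorem relRank_eq_iSup (wf : WellFounded r) :
    relRank r = ⨆ a : γ, Order.succ (wf.apply a).rank :=
  dif_pos wf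

theorem Acc.rank_lt_relRank (wf : WellFounded r) {a : γ} (h : Acc r a) : h.rank < relRank r := by
  rw [relRank_eq_iSup wf]
  exact (Order.lt_succ _).trans_le (Ordinal.le_iSup (fun a => Order.succ (wf.apply a).rank) a)

theorem Acc.rank_le_of_forall_rel_lt {f : γ → Ordinal.{u}} (hf : ∀ a b, r a b → f a < f b)
    {a : γ} (h : Acc r a) : h.rank ≤ f a := by
  induction h with
  | intro a _ ih =>
    rw [Acc.rank_eq]
    exact Ordinal.iSup_le fun b => Order.succ_le_of_lt ((ih b.1 b.2).trans_lt (hf _ _ b.2))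

theorem relRank_le_of_forall_rel_lt {f : γ → Ordinal.{u}} (hf : ∀ a b, r a b → f a < f b)
    {o : Ordinal.{u}} (ho : ∀ a, f a < o) : relRank r ≤ o := by
  have wf : WellFounded r := Subrelation.wf (hf _ _) (InvImage.wf f Ordinal.lt_wf)
  rw [relRank_eq_iSup wf]
  exact Ordinal.iSup_le fun a =>
    Order.succ_le_of_lt (((wf.apply a).rank_le_of_forall_rel_lt hf).trans_lt (ho a))

end RelRank

section Tree

variable {γ : Type u} {P : Type u} [Preorder P]

theorem extRel.length_lt {T : Set (List γ)} {s t : T} (h : extRel T s t) :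
    t.1.length < s.1.length :=
  h.1.length_le.lt_of_ne fun e => h.2 (h.1.eq_of_length e)

theorem wellFounded_extRel_incSeqs (hP : FAC P) : WellFounded (extRel (IncSeqs P)) := by
  refine wellFounded_iff_isEmpty_descending_chain.2 ⟨fun ⟨e, he⟩ => ?_⟩
  have hprefix : ∀ {m n}, m ≤ n → (e m).1 <+: (e n).1 := fun h => by
    induction h with
    | refl => exact List.prefix_refl _
    | step _ ih => exact ih.trans (he _).1
  have hlen : ∀ n, n < (e n).1.length := fun n => by
    induction n with
    | zero => exact List.length_pos_iff.2 (e 0).2.1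
    | succ n ih => exact (Nat.succ_le_of_lt ih).trans_lt (he n).length_lt
  -- The `n`-th entry of `e n` never changes later on, so these entries form an infinite antichain.
  let F : ℕ → P := fun n => (e n).1[n]'(hlen n)
  have hF : ∀ {i j}, i < j → IncompRel (· ≤ ·) (F i) (F j) := fun {i j} hij => by
    have hFi : F i = (e j).1[i]'((hlen i).trans_le (hprefix hij.le).length_le) :=
      (hprefix hij.le).getElem (hlen i)
    rw [hFi]
    exact List.pairwise_iff_getElem.1 (e j).2.2 i j _ (hlen j) hij
  have hFinj : F.Injective := fun i j hij => by
    by_contra hne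
    rcases lt_or_gt_of_ne hne with h | h
    · exact (hF h).1 hij.le
    · exact (hF h).1 hij.ge
  refine Set.infinite_range_of_injective hFinj (hP _ ?_)
  rintro _ ⟨i, rfl⟩ _ ⟨j, rfl⟩ hne
  rcases lt_or_gt_of_ne (fun h => hne (congrArg F h)) with h | h
  · exact (hF h).1
  · exact (hF h).2

end Tree

section Width

variable {P Q : Type u} [Preorder P] [Preorder Q]

open Classical in
/-- Rank in the tree of antichain sequences, with `width P` at the root `[]`. -/
noncomputable def incSeqRank (wf : WellFounded (extRel (IncSeqs P))) (l : List P) :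
    Ordinal.{u} :=
  if h : l ∈ IncSeqs P then (wf.apply ⟨l, h⟩).rank else width P

variable (wf : WellFounded (extRel (IncSeqs P)))

theorem incSeqRank_le_width (l : List P) : incSeqRank wf l ≤ width P := by
  unfold incSeqRank
  split_ifs
  · exact (Acc.rank_lt_relRank wf _).le
  · exact le_rfl

theorem incSeqRank_lt_of_prefix {l l' : List P} (h : l <+: l') (hne : l ≠ l')
    (hl' : l'.Pairwise (IncompRel (· ≤ ·))) : incSeqRank wf l' < incSeqRank wf l := by
  have hl'_mem : l' ∈ IncSeqs P := ⟨fun e => hne (List.prefix_nil.1 (e ▸ h) ▸ e.symm), hl'⟩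
  rw [incSeqRank, dif_pos hl'_mem, incSeqRank]
  split_ifs with hl
  · exact Acc.rank_lt_of_rel (wf.apply ⟨l, hl⟩) (⟨h, hne⟩ : extRel _ ⟨l', hl'_mem⟩ ⟨l, hl⟩)
  · exact Acc.rank_lt_relRank wf _

theorem incSeqRank_le_of_prefix {l l' : List P} (h : l <+: l')
    (hl' : l'.Pairwise (IncompRel (· ≤ ·))) : incSeqRank wf l' ≤ incSeqRank wf l := by
  rcases eq_or_ne l l' with rfl | hne
  · exact le_rfl
  · exact (incSeqRank_lt_of_prefix wf h hne hl').le

end Width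

section Extension

open Function

variable {P Q : Type u} [Preorder P] [Preorder Q] (g : P ↪o Q)

theorem pairwise_incompRel_filterMap_partialInv {l : List Q}
    (hl : l.Pairwise (IncompRel (· ≤ ·))) :
    (l.filterMap (partialInv g)).Pairwise (IncompRel (· ≤ ·)) := by
  refine List.pairwise_filterMap.2 (hl.imp fun {p q} hpq a ha b hb => ?_)
  rw [g.injective.isPartialInv] at ha hb
  subst ha hb
  exact ⟨fun h => hpq.1 (g.le_iff_le.2 h), fun h => hpq.2 (g.le_iff_le.2 h)⟩

theorem filterMap_partialInv_eq_nil_iff {l : List Q} :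
    l.filterMap (partialInv g) = [] ↔ ∀ q ∈ l, q ∉ Set.range g := by
  simp only [List.filterMap_eq_nil_iff, Option.eq_none_iff_forall_ne_some, Set.mem_range,
    not_exists]
  exact forall₂_congr fun q _ => forall_congr' fun p => not_congr (g.injective.isPartialInv p q)

variable (wf : WellFounded (extRel (IncSeqs P)))

open Classical in
noncomputable def traceRank (l : List Q) : Ordinal.{u} :=
  incSeqRank wf (l.filterMap (partialInv g)) + if ∀ q ∈ l, q ∈ Set.range g then 1 else 0

theorem traceRank_le_width {l : List Q} (hl : l ∈ IncSeqs Q) : traceRank g wf l ≤ width P := by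
  by_cases hnil : l.filterMap (partialInv g) = []
  · obtain ⟨q, hq⟩ := List.exists_mem_of_ne_nil _ hl.1
    have hout : ¬ ∀ q ∈ l, q ∈ Set.range g :=
      fun h => (filterMap_partialInv_eq_nil_iff g).1 hnil q hq (h q hq)
    rw [traceRank, if_neg hout, add_zero]
    exact incSeqRank_le_width wf _
  · have hmem : l.filterMap (partialInv g) ∈ IncSeqs P :=
      ⟨hnil, pairwise_incompRel_filterMap_partialInv g hl.2⟩
    have hlt : incSeqRank wf (l.filterMap (partialInv g)) < width P := by
      rw [incSeqRank, dif_pos hmem]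
      exact Acc.rank_lt_relRank wf _
    refine (add_le_add_right ?_ _).trans (Order.add_one_le_of_lt hlt)
    split_ifs <;> simp

theorem traceRank_lt_of_extRel (hg : IsChain (· ≤ ·) (Set.range g)ᶜ) {s t : IncSeqs Q}
    (h : extRel _ s t) : traceRank g wf s.1 < traceRank g wf t.1 := by
  obtain ⟨u, hu⟩ := h.1
  have hu_ne : u ≠ [] := fun e => h.2 (by rw [← hu, e, List.append_nil])
  have hs : (t.1 ++ u).Pairwise (IncompRel (· ≤ ·)) := hu ▸ s.2.2
  have hcross : ∀ p ∈ t.1, ∀ q ∈ u, IncompRel (· ≤ ·) p q := (List.pairwise_append.1 hs).2.2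
  have htrace := pairwise_incompRel_filterMap_partialInv g hs
  rw [List.filterMap_append] at htrace
  rw [← hu, traceRank, traceRank, List.filterMap_append]
  by_cases hu_in : ∀ q ∈ u, q ∈ Set.range g
  · have hu_trace : u.filterMap (partialInv g) ≠ [] := fun e => by
      obtain ⟨q, hq⟩ := List.exists_mem_of_ne_nil _ hu_ne
      exact (filterMap_partialInv_eq_nil_iff g).1 e q hq (hu_in q hq)
    have hlt := incSeqRank_lt_of_prefix wf (List.prefix_append _ _)
      (fun e => hu_trace (List.append_right_eq_self.1 e.symm)) htrace
    by_cases ht_in : ∀ p ∈ t.1, p ∈ Set.range g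
    · have hs_in : ∀ q ∈ t.1 ++ u, q ∈ Set.range g := fun q hq =>
        (List.mem_append.1 hq).elim (ht_in q) (hu_in q)
      rw [if_pos hs_in, if_pos ht_in]
      exact Order.lt_add_one_iff.2 (Order.add_one_le_iff.2 hlt)
    · have hs_out : ¬ ∀ q ∈ t.1 ++ u, q ∈ Set.range g := fun hs_in =>
        ht_in fun p hp => hs_in p (List.mem_append_left _ hp)
      rw [if_neg hs_out, if_neg ht_in]
      simpa only [add_zero] using hlt
  · -- Two elements outside `P` are comparable, so an antichain has at most one of them.
    obtain ⟨q, hq, hqg⟩ := not_forall₂.1 hu_in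
    have ht_in : ∀ p ∈ t.1, p ∈ Set.range g := fun p hp => by
      by_contra hpg
      rcases hg.total hpg hqg with hpq | hqp
      exacts [(hcross p hp q hq).1 hpq, (hcross p hp q hq).2 hqp]
    rw [if_neg fun hs_in => hqg (hs_in q (List.mem_append_right _ hq)), if_pos ht_in, add_zero]
    exact (incSeqRank_le_of_prefix wf (List.prefix_append _ _) htrace).trans_lt
      (lt_add_one _)

theorem width_le_width_add_one_of_isChain_compl_range
    (hg : IsChain (· ≤ ·) (Set.range g)ᶜ) (hP : FAC P) : width Q ≤ width P + 1 := by
  have wf := wellFounded_extRel_incSeqs hP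
  exact relRank_le_of_forall_rel_lt (f := fun s : IncSeqs Q => traceRank g wf s.1)
    (fun _ _ h => traceRank_lt_of_extRel g wf hg h)
    (fun s => (traceRank_le_width g wf s.2).trans_lt (lt_add_one _))

end Extension

theorem width_add_one_le_width_of_incompRel {P Q : Type u} [Preorder P] [Preorder Q]
    (g : P ↪o Q) (q₀ : Q) (hq₀ : ∀ p, IncompRel (· ≤ ·) q₀ (g p)) (hQ : FAC Q) :
    width P + 1 ≤ width Q := by
  have wf := wellFounded_extRel_incSeqs hQ
  have hcons : ∀ l : List P, l.Pairwise (IncompRel (· ≤ ·)) → q₀ :: l.map g ∈ IncSeqs Q :=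
    fun l hl => ⟨List.cons_ne_nil _ _, List.pairwise_cons.2
      ⟨List.forall_mem_map.2 fun p _ => hq₀ p,
        hl.map g fun _ _ h => ⟨fun c => h.1 (g.le_iff_le.1 c), fun c => h.2 (g.le_iff_le.1 c)⟩⟩⟩
  -- Prefixing `q₀` embeds the tree of `P` below the node `[q₀]` of the tree of `Q`.
  let root : IncSeqs Q := ⟨[q₀], hcons [] List.Pairwise.nil⟩
  let G : IncSeqs P → IncSeqs Q := fun l => ⟨q₀ :: l.1.map g, hcons l.1 l.2.2⟩
  have hG : ∀ l l', extRel _ l l' → extRel _ (G l) (G l') := fun l l' h =>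
    ⟨List.cons_prefix_cons.2 ⟨rfl, h.1.map g⟩,
      fun e => h.2 (List.map_injective_iff.2 g.injective (List.cons_injective e))⟩
  have hroot : ∀ l, extRel _ (G l) root := fun l =>
    ⟨List.cons_prefix_cons.2 ⟨rfl, List.nil_prefix⟩,
      fun e => l.2.1 (List.map_eq_nil_iff.1 (List.cons_injective e).symm)⟩
  have hle : width P ≤ (wf.apply root).rank :=
    relRank_le_of_forall_rel_lt (f := fun l => (wf.apply (G l)).rank)
      (fun l l' h => Acc.rank_lt_of_rel _ (hG l l' h)) (fun l => Acc.rank_lt_of_rel _ (hroot l))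
  exact Order.add_one_le_of_lt (hle.trans_lt (Acc.rank_lt_relRank wf _))

section Product

variable {B B' : Type u} [Preorder B] [Preorder B']

def OrderEmbedding.prodMap {A A' : Type u} [Preorder A] [Preorder A'] (f : A ↪o A')
    (g : B ↪o B') : A × B ↪o A' × B' where
  toFun := Prod.map f g
  inj' := f.injective.prodMap g.injective
  map_rel_iff' := by simp [Prod.le_def]

theorem width_prod_le_width_prod_add_one {A : Type u} [LinearOrder A] (ι : B ↪o B') (t : B')
    (hι : ∀ y, y ∈ Set.range ι ∨ y = t) (h : FAC (A × B)) :
    width (A × B') ≤ width (A × B) + 1 := by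
  set g := (OrderIso.refl A).toOrderEmbedding.prodMap ι
  have hlast : ∀ x ∈ (Set.range g)ᶜ, x.2 = t := by
    rintro ⟨a, y⟩ hx
    refine (hι y).resolve_left ?_
    rintro ⟨b, rfl⟩
    exact hx ⟨(a, b), rfl⟩
  refine width_le_width_add_one_of_isChain_compl_range g (fun x hx y hy _ => ?_) h
  rcases le_total x.1 y.1 with h | h
  · exact Or.inl ⟨h, ((hlast x hx).trans (hlast y hy).symm).le⟩
  · exact Or.inr ⟨h, ((hlast y hy).trans (hlast x hx).symm).le⟩

theorem width_prod_add_one_le_width_prod {A A' : Type u} [Preorder A] [Preorder A']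
    (σ : A ↪o A') (a₀ : A') (hσ : ∀ a, ¬ σ a ≤ a₀)
    (ι : B ↪o B') (t : B') (hι : ∀ b, ¬ t ≤ ι b) (h : FAC (A' × B')) :
    width (A × B) + 1 ≤ width (A' × B') :=
  width_add_one_le_width_of_incompRel (σ.prodMap ι) (a₀, t)
    (fun p => ⟨fun hle => hι p.2 hle.2, fun hle => hσ p.1 hle.1⟩) h

end Product

theorem fac_of_wellQuasiOrderedLE {P : Type u} [Preorder P] [WellQuasiOrderedLE P] : FAC P :=
  fun _ h => WellQuasiOrderedLE.finite_of_isAntichain h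

theorem exists_orderEmbedding_toType_add_one (β : Ordinal.{u}) :
    ∃ (ι : β.ToType ↪o (β + 1).ToType) (t : (β + 1).ToType),
      (∀ b, ¬ t ≤ ι b) ∧ ∀ y, y ∈ Set.range ι ∨ y = t := by
  have hβ : β < β + 1 := lt_add_one β
  refine ⟨OrderEmbedding.ofStrictMono
    (fun b => ToType.mk ⟨b.toOrd, (Set.mem_Iio.1 b.toOrd.2).trans hβ⟩)
    fun a b h => ToType.mk.strictMono (ToType.mk.symm.strictMono h), ToType.mk ⟨β, hβ⟩, ?_, ?_⟩
  · intro b hle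
    exact (b.toOrd.2 : (b.toOrd : Ordinal) < β).not_ge (ToType.mk.le_iff_le.1 hle)
  · intro y
    obtain ⟨⟨v, hv⟩, rfl⟩ := ToType.mk.surjective y
    rcases (Order.lt_add_one_iff.1 (Set.mem_Iio.1 hv)).lt_or_eq with hvβ | rfl
    · refine Or.inl ⟨ToType.mk ⟨v, hvβ⟩, ?_⟩
      exact congrArg (ToType.mk (o := β + 1)) (Subtype.ext (by simp))
    · exact Or.inr rfl

theorem exists_orderEmbedding_toType_not_le {α : Ordinal.{u}} (hα : ω ≤ α) :
    ∃ (σ : α.ToType ↪o α.ToType) (a₀ : α.ToType), ∀ a, ¬ σ a ≤ a₀ := by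
  have hlt : ∀ v < α, 1 + v < α := fun v hv => by
    simpa only [one_add_of_omega0_le hα] using (add_lt_add_iff_left 1).2 hv
  -- The shift `v ↦ 1 + v` misses `0` and fixes every infinite ordinal.
  refine ⟨OrderEmbedding.ofStrictMono (fun a => ToType.mk ⟨1 + a.toOrd.1, hlt _ a.toOrd.2⟩)
    fun a b h => ToType.mk.strictMono (show 1 + a.toOrd.1 < 1 + b.toOrd.1 from
      (add_lt_add_iff_left 1).2 (ToType.mk.symm.strictMono h)),
    ToType.mk ⟨0, omega0_pos.trans_le hα⟩, fun a hle => ?_⟩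
  have h0 : 1 + a.toOrd.1 ≤ 0 :=
    (ToType.mk.le_iff_le (x := ⟨1 + a.toOrd.1, hlt _ a.toOrd.2⟩) (y := ⟨0, _⟩)).1 hle
  exact (zero_lt_one.trans_le le_self_add).not_ge h0

/-- **Abraham.** For `α` infinite,
`w(α × (β+1)) = w(α × β) + 1` (componentwise product order). -/
theorem stmt_16 (α β : Ordinal.{u}) (hα : Ordinal.omega0 ≤ α) :
    width (α.ToType × (β + 1).ToType) = width (α.ToType × β.ToType) + 1 := by
  obtain ⟨ι, t, hι_top, hι_range⟩ := exists_orderEmbedding_toType_add_one β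
  obtain ⟨σ, a₀, hσ⟩ := exists_orderEmbedding_toType_not_le hα
  exact le_antisymm
    (width_prod_le_width_prod_add_one ι t hι_range fac_of_wellQuasiOrderedLE)
    (width_prod_add_one_le_width_prod σ a₀ hσ ι t hι_top fac_of_wellQuasiOrderedLE)
end

section
/- w(ω × α) = α for every ordinal α, where ω × α carries the componentwise product order. -/
universe u

open Ordinal

/-!
An antichain in `ω × α` is a finite set of points whose second coordinates strictly decrease as
the first ones increase. To a node of the tree of antichain sequences attach the ordinal
`x + N`, where `x` is the lowest second coordinate used and `N` is the largest number of points
above level `x` that can still be appended; `N` is finite because such points lie to the left of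
the lowest one. Appending a point above `x` lowers `N`; appending one at a level `y < x` lowers
the level, and the new points that fit strictly between `y` and `x` are fewer than the gap from
`y` to `x`, which pays for them. So ranks are bounded by this invariant, which stays below `α`.
Conversely, a point at any level below `x` far enough to the right can always be appended, so
the rank of a node is at least its lowest level.
-/

section Rank

variable {β : Type*} {r : β → β → Prop}

theorem Acc.rank_le_of_lt {f : β → Ordinal} (hf : ∀ ⦃a b⦄, r a b → f a < f b) {a : β}
    (ha : Acc r a) : ha.rank ≤ f a := by
  induction ha with
  | intro a _ ih =>
    rw [Acc.rank_eq]
    exact Ordinal.iSup_le fun b => Order.succ_le_of_lt ((ih b b.2).trans_lt (hf b.2))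

theorem WellFounded.le_rank {g : β → Ordinal} (hwf : WellFounded r)
    (hg : ∀ b, ∀ o < g b, ∃ a, r a b ∧ o ≤ g a) (b : β) :
    g b ≤ (hwf.apply b).rank := by
  induction b using hwf.induction with
  | _ b ih =>
    refine le_of_forall_lt fun o ho => ?_
    obtain ⟨a, hab, hoa⟩ := hg b o ho
    exact (hoa.trans (ih a hab)).trans_lt ((hwf.apply b).rank_lt_of_rel hab)

end Rank

section RelRank

variable {β : Type u} {r : β → β → Prop}

theorem relRank_le_of_lt (f : β → Ordinal.{u}) (hf : ∀ ⦃a b⦄, r a b → f a < f b)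
    {o : Ordinal.{u}} (ho : ∀ a, f a < o) : relRank r ≤ o := by
  have hwf : WellFounded r := Subrelation.wf (fun h => hf h) (InvImage.wf f Ordinal.lt_wf)
  rw [relRank, dif_pos hwf]
  exact Ordinal.iSup_le fun a =>
    Order.succ_le_of_lt (((hwf.apply a).rank_le_of_lt hf).trans_lt (ho a))

theorem lt_relRank {g : β → Ordinal.{u}} (hwf : WellFounded r)
    (hg : ∀ b, ∀ o < g b, ∃ a, r a b ∧ o ≤ g a) (b : β) : g b < relRank r := by
  rw [relRank, dif_pos hwf]
  exact (hwf.le_rank hg b).trans_lt ((Order.lt_succ _).trans_le (Ordinal.le_iSup _ b))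

end RelRank

theorem lt_of_extRel {α : Type u} {T : Set (List α)}
    (hT : ∀ l a, l ≠ [] → l ++ [a] ∈ T → l ∈ T)
    {f : T → Ordinal} (hf : ∀ (s t : T) a, s.1 = t.1 ++ [a] → f s < f t) {s t : T}
    (h : extRel T s t) : f s < f t := by
  obtain ⟨⟨u, hu⟩, hne⟩ := h
  induction u using List.reverseRecOn generalizing s with
  | nil => exact absurd (by simpa using hu) hne
  | append_singleton u a ih =>
    rcases eq_or_ne u [] with rfl | hu'
    · exact hf s t a (by simpa using hu.symm)
    · have hmem : t.1 ++ u ∈ T :=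
        hT _ a (by simp [hu']) (by rw [List.append_assoc, hu]; exact s.2)
      exact (hf s ⟨_, hmem⟩ a (by simp [← hu])).trans
        (ih (s := ⟨_, hmem⟩) (by simpa using hu') rfl)

theorem IncSeqs.mem_of_append_mem {P : Type u} [Preorder P] {l : List P} {a : P} (hl : l ≠ [])
    (h : l ++ [a] ∈ IncSeqs P) : l ∈ IncSeqs P :=
  ⟨hl, h.2.sublist (List.sublist_append_left _ _)⟩

theorem typein_add_card_lt {B : Type u} [LinearOrder B] [WellFoundedLT B] {x : B}
    {c : Ordinal.{u}} (s : Finset B) (hxc : typein (α := B) (· < ·) x < c)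
    (hs : ∀ b ∈ s, x < b ∧ typein (α := B) (· < ·) b < c) :
    typein (α := B) (· < ·) x + s.card < c := by
  classical
  induction s using Finset.induction_on_max generalizing c with
  | empty => simpa using hxc
  | insert a s has ih =>
    have hxs := ih ((typein_lt_typein _).2 (hs a (by simp)).1) fun b hb =>
      ⟨(hs b (by simp [hb])).1, (typein_lt_typein _).2 (has b hb)⟩
    rw [Finset.card_insert_of_notMem fun h => (has a h).false, Nat.cast_succ, ← add_assoc]
    exact (Order.add_one_le_of_lt hxs).trans_lt (hs a (by simp)).2

theorem List.exists_fst_gt {A B : Type*} [LinearOrder A] [Nonempty A] [NoMaxOrder A]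
    (l : List (A × B)) : ∃ n : A, ∀ q ∈ l, q.1 < n := by
  obtain ⟨m, hm⟩ := (l.map Prod.fst).toFinset.exists_le
  obtain ⟨n, hn⟩ := exists_gt m
  exact ⟨n, fun q hq => (hm _ (List.mem_toFinset.2 (List.mem_map_of_mem hq))).trans_lt hn⟩

namespace Prod

variable {A B : Type*} [LinearOrder A] [LinearOrder B] {p q : A × B}

theorem fst_ne_of_incompRel (h : IncompRel (· ≤ ·) p q) : p.1 ≠ q.1 := fun he =>
  (le_total p.2 q.2).elim (fun h2 => h.1 ⟨he.le, h2⟩) fun h2 => h.2 ⟨he.ge, h2⟩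

theorem snd_ne_of_incompRel (h : IncompRel (· ≤ ·) p q) : p.2 ≠ q.2 := fun he =>
  (le_total p.1 q.1).elim (fun h1 => h.1 ⟨h1, he.le⟩) fun h1 => h.2 ⟨h1, he.ge⟩

theorem fst_lt_of_incompRel_of_snd_le (h : IncompRel (· ≤ ·) p q) (h2 : q.2 ≤ p.2) :
    p.1 < q.1 :=
  lt_of_not_ge fun h1 => h.2 ⟨h1, h2⟩

theorem card_image_snd_of_pairwise_incompRel {S : Finset (A × B)}
    (hS : (S : Set (A × B)).Pairwise (IncompRel (· ≤ ·))) : (S.image Prod.snd).card = S.card :=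
  Finset.card_image_of_injOn fun _ hp _ hq h =>
    by_contra fun hne => snd_ne_of_incompRel (hS hp hq hne) h

end Prod

section Product

variable {A B : Type u} [LinearOrder B]

def lowestSnd (l : List (A × B)) (hl : l ≠ []) : B :=
  (l.map Prod.snd).min (by simpa using hl)

theorem lowestSnd_le {l : List (A × B)} (hl : l ≠ []) {p : A × B} (hp : p ∈ l) :
    lowestSnd l hl ≤ p.2 :=
  List.min_le_of_mem (List.mem_map_of_mem hp)

theorem exists_snd_eq_lowestSnd {l : List (A × B)} (hl : l ≠ []) :
    ∃ e ∈ l, e.2 = lowestSnd l hl :=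
  List.mem_map.1 (List.min_mem _)

theorem lowestSnd_append_singleton {l : List (A × B)} (hl : l ≠ []) (a : A × B) :
    lowestSnd (l ++ [a]) (List.append_ne_nil_of_right_ne_nil l (List.cons_ne_nil a [])) =
      min (lowestSnd l hl) a.2 := by
  refine le_antisymm ?_ ?_
  · obtain ⟨e, he, hex⟩ := exists_snd_eq_lowestSnd hl
    exact le_min (hex ▸ lowestSnd_le _ (List.mem_append_left [a] he))
      (lowestSnd_le _ (List.mem_append_right _ (List.mem_singleton_self a)))
  · refine (List.le_min_iff _).2 fun b hb => ?_
    obtain ⟨p, hp, rfl⟩ := List.mem_map.1 hb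
    rcases List.mem_append.1 hp with hp | hp
    · exact (min_le_left _ _).trans (lowestSnd_le hl hp)
    · exact (List.mem_singleton.1 hp) ▸ min_le_right _ _

variable [LinearOrder A]

structure IsAppendableAbove (l : List (A × B)) (x : B) (S : Finset (A × B)) : Prop where
  incompRel_of_mem : ∀ p ∈ S, ∀ q ∈ l, IncompRel (· ≤ ·) p q
  pairwise : (S : Set (A × B)).Pairwise (IncompRel (· ≤ ·))
  lt_snd : ∀ p ∈ S, x < p.2

theorem isAppendableAbove_empty (l : List (A × B)) (x : B) : IsAppendableAbove l x ∅ :=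
  ⟨by simp, by simp, by simp⟩

noncomputable def appendableCount (l : List (A × B)) (x : B) : ℕ :=
  sSup {n | ∃ S, IsAppendableAbove l x S ∧ S.card = n}

theorem bddAbove_appendable (hA : ∀ a : A, (Set.Iio a).Finite) {l : List (A × B)} {x : B}
    {e : A × B} (he : e ∈ l) (hx : e.2 ≤ x) :
    BddAbove {n | ∃ S, IsAppendableAbove l x S ∧ S.card = n} := by
  classical
  refine ⟨(hA e.1).toFinset.card, ?_⟩
  rintro _ ⟨S, hS, rfl⟩
  refine Finset.card_le_card_of_injOn Prod.fst (fun p hp => ?_) fun p hp q hq h => ?_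
  · simpa using Prod.fst_lt_of_incompRel_of_snd_le (hS.incompRel_of_mem p hp e he)
      (hx.trans (hS.lt_snd p hp).le)
  · by_contra hne
    exact Prod.fst_ne_of_incompRel (hS.pairwise hp hq hne) h

theorem IsAppendableAbove.card_le (hA : ∀ a : A, (Set.Iio a).Finite) {l : List (A × B)} {x : B}
    {e : A × B} (he : e ∈ l) (hx : e.2 ≤ x) {S : Finset (A × B)}
    (hS : IsAppendableAbove l x S) : S.card ≤ appendableCount l x :=
  le_csSup (bddAbove_appendable hA he hx) ⟨S, hS, rfl⟩

theorem exists_card_eq_appendableCount (hA : ∀ a : A, (Set.Iio a).Finite) {l : List (A × B)}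
    {x : B} {e : A × B} (he : e ∈ l) (hx : e.2 ≤ x) :
    ∃ S, IsAppendableAbove l x S ∧ S.card = appendableCount l x :=
  Nat.sSup_mem (s := {n | ∃ S, IsAppendableAbove l x S ∧ S.card = n})
    ⟨0, ∅, isAppendableAbove_empty l x, rfl⟩ (bddAbove_appendable hA he hx)

theorem appendableCount_append_lt (hA : ∀ a : A, (Set.Iio a).Finite) {l : List (A × B)}
    {x : B} {a e : A × B} (he : e ∈ l) (hx : e.2 ≤ x) (hxa : x < a.2)
    (ha : ∀ q ∈ l, IncompRel (· ≤ ·) q a) :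
    appendableCount (l ++ [a]) x < appendableCount l x := by
  classical
  obtain ⟨S, hS, hcard⟩ := exists_card_eq_appendableCount hA (List.mem_append_left [a] he) hx
  have haS : a ∉ S := fun h => (hS.incompRel_of_mem a h a (by simp)).1 le_rfl
  have hins : IsAppendableAbove l x (insert a S) := by
    refine ⟨?_, ?_, ?_⟩
    · simp only [Finset.mem_insert, forall_eq_or_imp]
      exact ⟨fun q hq => (ha q hq).symm,
        fun p hp q hq => hS.incompRel_of_mem p hp q (List.mem_append_left [a] hq)⟩
    · rw [Finset.coe_insert, Set.pairwise_insert_of_symm]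
      exact ⟨hS.pairwise, fun p hp _ => (hS.incompRel_of_mem p hp a (by simp)).symm⟩
    · simp only [Finset.mem_insert, forall_eq_or_imp]
      exact ⟨hxa, hS.lt_snd⟩
  have := hins.card_le hA he hx
  rw [Finset.card_insert_of_notMem haS, hcard] at this
  omega

variable [WellFoundedLT B]

theorem typein_add_appendableCount_append_lt (hA : ∀ a : A, (Set.Iio a).Finite)
    {l : List (A × B)} {a e : A × B} (he : e ∈ l) (hae : a.2 < e.2) :
    typein (α := B) (· < ·) a.2 + appendableCount (l ++ [a]) a.2 <
      typein (α := B) (· < ·) e.2 + appendableCount l e.2 := by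
  classical
  obtain ⟨S, hS, hcard⟩ := exists_card_eq_appendableCount hA
    (List.mem_append_right l (List.mem_singleton_self a)) le_rfl
  set low := S.filter (·.2 < e.2)
  set high := S.filter (¬ ·.2 < e.2)
  have hlowS : (low : Set (A × B)) ⊆ S := Finset.coe_subset.2 (Finset.filter_subset _ _)
  have hhighS : (high : Set (A × B)) ⊆ S := Finset.coe_subset.2 (Finset.filter_subset _ _)
  have hincomp_e : ∀ p ∈ S, IncompRel (· ≤ ·) p e := fun p hp =>
    hS.incompRel_of_mem p hp e (List.mem_append_left [a] he)
  have hhigh : IsAppendableAbove l e.2 high := by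
    refine ⟨fun p hp q hq => ?_, hS.pairwise.mono hhighS, fun p hp => ?_⟩
    · exact hS.incompRel_of_mem p (Finset.mem_filter.1 hp).1 q (List.mem_append_left [a] hq)
    · obtain ⟨hpS, hp⟩ := Finset.mem_filter.1 hp
      exact (not_lt.1 hp).lt_of_ne' (Prod.snd_ne_of_incompRel (hincomp_e p hpS))
  have hlow : typein (α := B) (· < ·) a.2 + low.card < typein (α := B) (· < ·) e.2 := by
    rw [← Prod.card_image_snd_of_pairwise_incompRel (hS.pairwise.mono hlowS)]
    refine typein_add_card_lt _ ((typein_lt_typein _).2 hae) ?_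
    simp only [Finset.mem_image, Finset.mem_filter, low]
    rintro _ ⟨p, ⟨hpS, hpe⟩, rfl⟩
    exact ⟨hS.lt_snd p hpS, (typein_lt_typein _).2 hpe⟩
  calc typein (α := B) (· < ·) a.2 + appendableCount (l ++ [a]) a.2
      = typein (α := B) (· < ·) a.2 + low.card + high.card := by
        rw [← hcard, ← Finset.card_filter_add_card_filter_not (fun p : A × B => p.2 < e.2),
          Nat.cast_add, add_assoc]
    _ < typein (α := B) (· < ·) e.2 + high.card :=
        lt_of_not_ge fun h => hlow.not_ge ((Ordinal.add_le_add_iff_right _).1 h)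
    _ ≤ typein (α := B) (· < ·) e.2 + appendableCount l e.2 := by
        gcongr
        exact hhigh.card_le hA he le_rfl

noncomputable def potential (t : IncSeqs (A × B)) : Ordinal.{u} :=
  typein (α := B) (· < ·) (lowestSnd t.1 t.2.1) + appendableCount t.1 (lowestSnd t.1 t.2.1)

theorem potential_lt_type (hA : ∀ a : A, (Set.Iio a).Finite) (t : IncSeqs (A × B)) :
    potential t < typeLT B := by
  obtain ⟨e, he, hex⟩ := exists_snd_eq_lowestSnd t.2.1
  obtain ⟨S, hS, hcard⟩ := exists_card_eq_appendableCount hA he hex.le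
  rw [potential, ← hcard, ← Prod.card_image_snd_of_pairwise_incompRel hS.pairwise]
  refine typein_add_card_lt _ (typein_lt_type _ _) ?_
  simp only [Finset.mem_image]
  rintro _ ⟨p, hp, rfl⟩
  exact ⟨hS.lt_snd p hp, typein_lt_type _ _⟩

theorem potential_lt_of_eq_append (hA : ∀ a : A, (Set.Iio a).Finite) {s t : IncSeqs (A × B)}
    {a : A × B} (h : s.1 = t.1 ++ [a]) : potential s < potential t := by
  obtain ⟨s, hs⟩ := s
  dsimp only at h
  subst h
  have ha : ∀ q ∈ t.1, IncompRel (· ≤ ·) q a := fun q hq =>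
    (List.pairwise_append.1 hs.2).2.2 q hq a (List.mem_singleton_self a)
  obtain ⟨e, he, hex⟩ := exists_snd_eq_lowestSnd t.2.1
  rw [potential, potential]
  dsimp only
  rw [lowestSnd_append_singleton t.2.1, ← hex]
  rcases lt_or_gt_of_ne (Prod.snd_ne_of_incompRel (ha e he)) with hlt | hgt
  · rw [min_eq_left hlt.le]
    exact add_lt_add_right (Nat.cast_lt.2 (appendableCount_append_lt hA he le_rfl hlt ha)) _
  · rw [min_eq_right hgt.le]
    exact typein_add_appendableCount_append_lt hA he hgt

theorem exists_extRel_typein_lowestSnd_eq [Nonempty A] [NoMaxOrder A] (t : IncSeqs (A × B))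
    {o : Ordinal.{u}} (ho : o < typein (α := B) (· < ·) (lowestSnd t.1 t.2.1)) :
    ∃ s, extRel (IncSeqs (A × B)) s t ∧
      typein (α := B) (· < ·) (lowestSnd s.1 s.2.1) = o := by
  obtain ⟨y, rfl⟩ := typein_surj (· < ·) (ho.trans (typein_lt_type _ _))
  have hy : y < lowestSnd t.1 t.2.1 := (typein_lt_typein _).1 ho
  obtain ⟨n, hn⟩ := t.1.exists_fst_gt
  have hinc : ∀ q ∈ t.1, IncompRel (· ≤ ·) q (n, y) := fun q hq =>
    ⟨fun h => (hy.trans_le (lowestSnd_le t.2.1 hq)).not_ge h.2, fun h => (hn q hq).not_ge h.1⟩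
  have hmem : t.1 ++ [(n, y)] ∈ IncSeqs (A × B) :=
    ⟨by simp, List.pairwise_append.2 ⟨t.2.2, List.pairwise_singleton _ _,
      fun q hq _ h => (List.mem_singleton.1 h) ▸ hinc q hq⟩⟩
  refine ⟨⟨_, hmem⟩, ⟨⟨[(n, y)], rfl⟩, by simp⟩, ?_⟩
  rw [lowestSnd_append_singleton t.2.1, min_eq_right hy.le]

theorem potential_lt_of_extRel (hA : ∀ a : A, (Set.Iio a).Finite) {s t : IncSeqs (A × B)}
    (h : extRel (IncSeqs (A × B)) s t) : potential s < potential t :=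
  lt_of_extRel (fun _ _ => IncSeqs.mem_of_append_mem) (fun _ _ _ => potential_lt_of_eq_append hA) h

theorem width_prod_le_type (hA : ∀ a : A, (Set.Iio a).Finite) : width (A × B) ≤ typeLT B :=
  relRank_le_of_lt potential (fun _ _ => potential_lt_of_extRel hA) (potential_lt_type hA)

theorem typein_lowestSnd_lt_width [Nonempty A] [NoMaxOrder A] (hA : ∀ a : A, (Set.Iio a).Finite)
    (t : IncSeqs (A × B)) : typein (α := B) (· < ·) (lowestSnd t.1 t.2.1) < width (A × B) :=
  lt_relRank (Subrelation.wf (potential_lt_of_extRel hA) (InvImage.wf potential Ordinal.lt_wf))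
    (fun t _ ho => (exists_extRel_typein_lowestSnd_eq t ho).imp fun _ h => ⟨h.1, h.2.ge⟩) t

theorem width_prod_eq_type [Nonempty A] [NoMaxOrder A] (hA : ∀ a : A, (Set.Iio a).Finite) :
    width (A × B) = typeLT B := by
  refine le_antisymm (width_prod_le_type hA) (le_of_forall_lt fun o ho => ?_)
  obtain ⟨y, rfl⟩ := typein_surj (· < ·) ho
  simpa [lowestSnd] using typein_lowestSnd_lt_width hA
    ⟨[(Classical.arbitrary A, y)], List.cons_ne_nil _ _, List.pairwise_singleton _ _⟩

end Product

instance Ordinal.nonempty_toType_omega0 : Nonempty omega0.ToType :=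
  nonempty_toType_iff.2 omega0_ne_zero

instance Ordinal.noMaxOrder_toType_omega0 : NoMaxOrder omega0.ToType :=
  isSuccPrelimit_type_lt_iff.1 (by rw [type_toType]; exact isSuccLimit_omega0.isSuccPrelimit)

theorem Ordinal.finite_Iio_toType_omega0 (m : omega0.ToType) : (Set.Iio m).Finite :=
  Cardinal.lt_aleph0_iff_set_finite.1
    (card_lt_aleph0.2 ((typein_lt_type _ m).trans_eq (type_toType ω)))

/-- **Abraham.** `w(ω × α) = α` for every ordinal `α`. -/
theorem stmt_17 (α : Ordinal.{u}) :
    width (Ordinal.omega0.ToType × α.ToType) = α := by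
  rw [width_prod_eq_type finite_Iio_toType_omega0, type_toType]
end

section
/- For any WQO posets P₀, …, P_n, the product Π_{i≤n} h(P_i) of their heights (with componentwise order) embeds into Π_{i≤n} P_i as an induced substructure; consequently w(Π_{i≤n} P_i) ≥ w(Π_{i≤n} h(P_i)). -/
universe u

open Ordinal

namespace Stmt18

variable {P : Type u} [PartialOrder P]

def srel (s : Set P) : P → P → Prop := fun a b => a ∈ s ∧ b ∈ s ∧ a < b

theorem srel_wf (hw : WellFounded ((· < ·) : P → P → Prop)) (s : Set P) :
    WellFounded (srel s) :=
  Subrelation.wf (fun h => h.2.2) hw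

variable (hw : WellFounded ((· < ·) : P → P → Prop))

noncomputable def rk (s : Set P) (x : P) : Ordinal.{u} :=
  ((srel_wf hw s).apply x).rank

theorem rk_eq (s : Set P) (x : P) :
    rk hw s x = ⨆ b : { b // srel s b x }, Order.succ (rk hw s b) :=
  Acc.rank_eq _

theorem rk_lt {s : Set P} {x y : P} (h : srel s x y) : rk hw s x < rk hw s y :=
  Acc.rank_lt_of_rel _ h

noncomputable def ht (s : Set P) : Ordinal.{u} :=
  ⨆ x : s, Order.succ (rk hw s x.1)

theorem succ_rk_le_ht {s : Set P} {x : P} (hx : x ∈ s) :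
    Order.succ (rk hw s x) ≤ ht hw s :=
  Ordinal.le_iSup (fun x : s => Order.succ (rk hw s x.1)) ⟨x, hx⟩

theorem ht_le {s : Set P} {c : Ordinal} (h : ∀ x ∈ s, Order.succ (rk hw s x) ≤ c) :
    ht hw s ≤ c :=
  Ordinal.iSup_le fun x => h x.1 x.2

theorem rk_mono {s t : Set P} (hst : s ⊆ t) (x : P) : rk hw s x ≤ rk hw t x := by
  induction x using hw.induction with
  | _ x IH =>
    rw [rk_eq, rk_eq]
    refine Ordinal.iSup_le fun b => ?_
    calc Order.succ (rk hw s b.1) ≤ Order.succ (rk hw t b.1) :=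
          Order.succ_le_succ (IH b.1 b.2.2.2)
      _ ≤ _ := Ordinal.le_iSup _ (⟨b.1, hst b.2.1, hst b.2.2.1, b.2.2.2⟩ : {b // srel t b x})

def Dwn (s t : Set P) : Prop :=
  s ⊆ t ∧ ∀ x ∈ t, ∀ y ∈ s, x ≤ y → x ∈ s

theorem Dwn.trans_subset {s t u : Set P} (h : Dwn s u) (hst : s ⊆ t) (htu : t ⊆ u) :
    Dwn s t :=
  ⟨hst, fun x hx y hy hxy => h.2 x (htu hx) y hy hxy⟩

theorem rk_eq_of_down {s t : Set P} (h : Dwn s t) : ∀ x ∈ s, rk hw s x = rk hw t x := by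
  intro x
  induction x using hw.induction with
  | _ x IH =>
    intro hx
    refine le_antisymm (rk_mono hw h.1 x) ?_
    rw [rk_eq hw t, rk_eq hw s]
    refine Ordinal.iSup_le fun b => ?_
    have hbs : b.1 ∈ s := h.2 b.1 b.2.1 x hx (le_of_lt b.2.2.2)
    calc Order.succ (rk hw t b.1) = Order.succ (rk hw s b.1) := by
          rw [IH b.1 b.2.2.2 hbs]
      _ ≤ _ := Ordinal.le_iSup _ (⟨b.1, hbs, hx, b.2.2.2⟩ : {b // srel s b x})

theorem ht_cut {t D : Set P} (h : Dwn D t) :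
    ht hw t ≤ ht hw D + ht hw {z | z ∈ t ∧ z ∉ D} := by
  set E : Set P := {z | z ∈ t ∧ z ∉ D} with hE
  have aux : ∀ x, x ∈ t → x ∉ D → rk hw t x ≤ ht hw D + rk hw E x := by
    intro x
    induction x using hw.induction with
    | _ x IH =>
      intro hxt hxD
      rw [rk_eq hw t]
      refine Ordinal.iSup_le fun b => ?_
      by_cases hbD : b.1 ∈ D
      · have hbb : rk hw t b.1 = rk hw D b.1 := (rk_eq_of_down hw h b.1 hbD).symm
        rw [hbb]
        exact le_trans (succ_rk_le_ht hw hbD) (le_self_add)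
      · have h1 : rk hw t b.1 ≤ ht hw D + rk hw E b.1 := IH b.1 b.2.2.2 b.2.1 hbD
        calc Order.succ (rk hw t b.1) ≤ Order.succ (ht hw D + rk hw E b.1) :=
              Order.succ_le_succ h1
          _ = ht hw D + Order.succ (rk hw E b.1) := by
              rw [Ordinal.add_succ]
          _ ≤ ht hw D + rk hw E x := by
              refine add_le_add_right ?_ _
              exact Order.succ_le_of_lt (rk_lt hw
                (show srel E b.1 x from ⟨⟨b.2.1, hbD⟩, ⟨hxt, hxD⟩, b.2.2.2⟩))
  refine ht_le hw fun x hx => ?_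
  by_cases hxD : x ∈ D
  · have hxx : rk hw t x = rk hw D x := (rk_eq_of_down hw h x hxD).symm
    rw [hxx]
    exact le_trans (succ_rk_le_ht hw hxD) (le_self_add)
  · calc Order.succ (rk hw t x) ≤ Order.succ (ht hw D + rk hw E x) :=
          Order.succ_le_succ (aux x hx hxD)
      _ = ht hw D + Order.succ (rk hw E x) := by rw [Ordinal.add_succ]
      _ ≤ ht hw D + ht hw E :=
          add_le_add_right (succ_rk_le_ht hw (show x ∈ E from ⟨hx, hxD⟩)) _

theorem rk_le_ht_lt {s : Set P} {x : P} (hx : x ∈ s) :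
    rk hw s x ≤ ht hw {z | z ∈ s ∧ z < x} := by
  set d : Set P := {z | z ∈ s ∧ z < x} with hd
  have hdwn : Dwn d s := ⟨fun z hz => hz.1, fun a ha y hy hay => ⟨ha, lt_of_le_of_lt hay hy.2⟩⟩
  rw [rk_eq hw s]
  refine Ordinal.iSup_le fun b => ?_
  have hbd : b.1 ∈ d := ⟨b.2.1, b.2.2.2⟩
  rw [show rk hw s b.1 = rk hw d b.1 from (rk_eq_of_down hw hdwn b.1 hbd).symm]
  exact succ_rk_le_ht hw hbd

theorem ht_dest {s : Set P} {β : Ordinal} (h : Order.succ β ≤ ht hw s) :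
    ∃ x ∈ s, β ≤ rk hw s x := by
  have hh : β < ht hw s := lt_of_lt_of_le (Order.lt_succ β) h
  rw [ht, Ordinal.lt_iSup_iff] at hh
  obtain ⟨x, hx⟩ := hh
  exact ⟨x.1, x.2, Order.lt_succ_iff.1 hx⟩

theorem rk_dest {s : Set P} {x : P} {β : Ordinal} (h : Order.succ β ≤ rk hw s x) :
    ∃ y, srel s y x ∧ β ≤ rk hw s y := by
  have hh : β < rk hw s x := lt_of_lt_of_le (Order.lt_succ β) h
  rw [rk_eq, Ordinal.lt_iSup_iff] at hh
  obtain ⟨b, hb⟩ := hh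
  exact ⟨b.1, b.2, Order.lt_succ_iff.1 hb⟩

theorem ht_pos_nonempty {s : Set P} (h : 0 < ht hw s) : ∃ x, x ∈ s := by
  rw [ht, Ordinal.lt_iSup_iff] at h
  obtain ⟨x, -⟩ := h
  exact ⟨x.1, x.2⟩

/-! ### well-foundedness facts from WQO -/

theorem isWQO_wf (h : IsWQO P) : WellFounded ((· < ·) : P → P → Prop) := by
  rw [RelEmbedding.wellFounded_iff_isEmpty]
  refine ⟨fun emb => ?_⟩
  have hanti : StrictAnti (fun n : ℕ => emb n) :=
    strictAnti_nat_of_succ_lt fun n => emb.map_rel_iff.2 (Nat.lt_succ_self n)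
  obtain ⟨i, j, hij, hle⟩ := h fun n => emb n
  exact absurd (lt_of_le_of_lt hle (hanti hij)) (lt_irrefl _)

theorem downsets_wf (hq : IsWQO P) (s : Set P) :
    WellFounded (fun A B : {p : Set P // Dwn p s} => A.1 ⊂ B.1) := by
  haveI : IsIrrefl {p : Set P // Dwn p s} (fun A B => A.1 ⊂ B.1) :=
    ⟨fun a => ssubset_irrefl a.1⟩
  haveI : IsTrans {p : Set P // Dwn p s} (fun A B => A.1 ⊂ B.1) :=
    ⟨fun _ _ _ h1 h2 => ssubset_trans h1 h2⟩
  haveI : IsStrictOrder {p : Set P // Dwn p s} (fun A B => A.1 ⊂ B.1) := ⟨⟩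
  rw [RelEmbedding.wellFounded_iff_isEmpty]
  refine ⟨fun emb => ?_⟩
  have hss : ∀ n : ℕ, (emb (n + 1)).1 ⊂ (emb n).1 := fun n =>
    emb.map_rel_iff.2 (Nat.lt_succ_self n)
  have hchoose : ∀ n : ℕ, ∃ z, z ∈ (emb n).1 ∧ z ∉ (emb (n + 1)).1 := by
    intro n
    obtain ⟨z, hz1, hz2⟩ := Set.exists_of_ssubset (hss n)
    exact ⟨z, hz1, hz2⟩
  choose z hz1 hz2 using hchoose
  have hmono : ∀ m n : ℕ, m ≤ n → (emb n).1 ⊆ (emb m).1 := by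
    intro m n h
    induction n, h using Nat.le_induction with
    | base => exact subset_rfl
    | succ k hk IH => exact subset_trans (hss k).subset IH
  obtain ⟨i, j, hij, hle⟩ := hq z
  have hzj : z j ∈ (emb (i + 1)).1 := hmono (i + 1) j hij (hz1 j)
  exact hz2 i ((emb (i + 1)).2.2 (z i) ((emb i).2.1 (hz1 i)) (z j) hzj hle)

/-! ### the recursion -/

noncomputable def chainAux (hne : Nonempty P) (Dst : Set P)
    (gd : Ordinal.{u} → Ordinal.{u}) : Ordinal.{u} → P :=
  Ordinal.lt_wf.fix fun i rec =>
    haveI := fun p : Prop => Classical.propDecidable p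
    if h : ∃ x, x ∈ {z | z ∈ Dst ∧ ∀ j, ∀ hj : j < i, rec j hj < z} ∧
        gd i ≤ rk hw {z | z ∈ Dst ∧ ∀ j, ∀ hj : j < i, rec j hj < z} x ∧
        ∃ w, w ∈ {z | z ∈ Dst ∧ ∀ j, ∀ hj : j < i, rec j hj < z} ∧ x < w
    then h.choose else hne.some

def chainQ (hne : Nonempty P) (Dst : Set P) (gd : Ordinal.{u} → Ordinal.{u})
    (i : Ordinal.{u}) : Set P :=
  {z | z ∈ Dst ∧ ∀ j, ∀ _ : j < i, chainAux hw hne Dst gd j < z}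

def goodPt (hne : Nonempty P) (Dst : Set P) (gd : Ordinal.{u} → Ordinal.{u})
    (i : Ordinal.{u}) (x : P) : Prop :=
  x ∈ chainQ hw hne Dst gd i ∧ gd i ≤ rk hw (chainQ hw hne Dst gd i) x ∧
    ∃ w, w ∈ chainQ hw hne Dst gd i ∧ x < w

theorem chainAux_eq (hne : Nonempty P) (Dst : Set P) (gd : Ordinal.{u} → Ordinal.{u})
    (i : Ordinal.{u}) :
    chainAux hw hne Dst gd i =
      (haveI := fun p : Prop => Classical.propDecidable p
      if h : ∃ x, goodPt hw hne Dst gd i x then h.choose else hne.some) := by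
  conv_lhs => rw [chainAux, WellFounded.fix_eq]
  rfl

theorem chain_of_le_ht (hq : IsWQO P) :
    ∀ α : Ordinal.{u}, ∀ s : Set P, α ≤ ht hw s →
      ∃ f : Set.Iio α → P, StrictMono f ∧ ∀ i, f i ∈ s := by
  intro α
  induction α using Ordinal.induction with
  | _ α IH =>
  intro s hs
  have rkmono : ∀ t : Set P, ∀ a ∈ t, ∀ y ∈ t, a ≤ y → rk hw t a ≤ rk hw t y := by
    intro t a ha y hy h
    rcases eq_or_lt_of_le h with rfl | h
    · exact le_rfl
    · exact le_of_lt (rk_lt hw ⟨ha, hy, h⟩)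
  rcases Ordinal.zero_or_succ_or_isSuccLimit α with hα | ⟨β, hα⟩ | hαlim
  · subst hα
    exact ⟨fun i => absurd (show i.1 < 0 from i.2) not_lt_zero',
      fun i => absurd (show i.1 < 0 from i.2) not_lt_zero',
      fun i => absurd (show i.1 < 0 from i.2) not_lt_zero'⟩
  · subst hα
    obtain ⟨x, hxs, hβx⟩ := ht_dest hw hs
    have hd : β ≤ ht hw {z | z ∈ s ∧ z < x} := le_trans hβx (rk_le_ht_lt hw hxs)
    obtain ⟨c, hc, hcm⟩ := IH β (Order.lt_succ β) _ hd
    refine ⟨fun i => if h : i.1 < β then c ⟨i.1, h⟩ else x, ?_, ?_⟩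
    · intro i j hij
      have hij' : i.1 < j.1 := hij
      by_cases hj : j.1 < β
      · have hi : i.1 < β := lt_trans hij' hj
        simp only [dif_pos hi, dif_pos hj]
        exact hc (show (⟨i.1, hi⟩ : Set.Iio β) < ⟨j.1, hj⟩ from hij')
      · have hjβ : j.1 = β := le_antisymm (Order.lt_succ_iff.1 j.2) (not_lt.1 hj)
        have hi : i.1 < β := lt_of_lt_of_eq hij' hjβ
        simp only [dif_pos hi, dif_neg hj]
        exact (hcm ⟨i.1, hi⟩).2
    · intro i
      by_cases h : i.1 < β
      · simp only [dif_pos h]; exact (hcm ⟨i.1, h⟩).1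
      · simp only [dif_neg h]; exact hxs
  · -- limit case
    by_cases hdec : ∃ γ, γ < α ∧ γ ≠ 0 ∧ α - γ < α
    · -- decomposable limit
      obtain ⟨γ, hγα, hγ0, hβα⟩ := hdec
      set β := α - γ with hβdef
      have hαγ : γ + β = α := Ordinal.add_sub_cancel_of_le (le_of_lt hγα)
      have hβ0 : β ≠ 0 := by
        intro h
        rw [h, add_zero] at hαγ
        exact (ne_of_lt hγα) hαγ
      set W : Set P := {x | x ∈ s ∧ γ ≤ rk hw s x} with hWdef
      set D : Set P := {x | x ∈ s ∧ rk hw s x < γ} with hDdef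
      have hDdwn : Dwn D s :=
        ⟨fun z hz => hz.1, fun a ha y hy hay =>
          ⟨ha, lt_of_le_of_lt (rkmono s a ha y hy.1 hay) hy.2⟩⟩
      have hDht : ht hw D ≤ γ := by
        refine ht_le hw fun x hx => ?_
        rw [rk_eq_of_down hw hDdwn x hx]
        exact Order.succ_le_of_lt hx.2
      have hWE : {z | z ∈ s ∧ z ∉ D} = W := by
        ext z
        simp only [Set.mem_setOf_eq, hDdef, hWdef, not_and, not_lt]
        constructor
        · rintro ⟨hzs, h2⟩; exact ⟨hzs, h2 hzs⟩
        · rintro ⟨hzs, h2⟩; exact ⟨hzs, fun _ => h2⟩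
      have hWht : β ≤ ht hw W := by
        have h1 : γ + β ≤ γ + ht hw W := by
          calc γ + β = α := hαγ
            _ ≤ ht hw s := hs
            _ ≤ ht hw D + ht hw {z | z ∈ s ∧ z ∉ D} := ht_cut hw hDdwn
            _ = ht hw D + ht hw W := by rw [hWE]
            _ ≤ γ + ht hw W := add_le_add_left hDht _
        by_contra h
        exact absurd h1 (not_le.2 (add_lt_add_right (not_le.1 h) γ))
      obtain ⟨fW, hfW, hfWm⟩ := IH β hβα W hWht
      have h0β : (0 : Ordinal) < β := pos_iff_ne_zero.2 hβ0
      set x0 : P := fW ⟨0, h0β⟩ with hx0def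
      have hx0W : x0 ∈ W := hfWm _
      have hγd : γ ≤ ht hw {z | z ∈ s ∧ z < x0} := le_trans hx0W.2 (rk_le_ht_lt hw hx0W.1)
      obtain ⟨fγ, hfγ, hfγm⟩ := IH γ hγα _ hγd
      have hsub : ∀ i : Set.Iio α, ¬ i.1 < γ → i.1 - γ < β := by
        intro i hi
        have h1 : γ + (i.1 - γ) = i.1 := Ordinal.add_sub_cancel_of_le (not_lt.1 hi)
        have h2 : i.1 < γ + β := by rw [hαγ]; exact i.2
        rw [← h1] at h2
        exact (add_lt_add_iff_left γ).1 h2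
      refine ⟨fun i => if h : i.1 < γ then fγ ⟨i.1, h⟩ else fW ⟨i.1 - γ, hsub i h⟩, ?_, ?_⟩
      · intro i j hij
        have hij' : i.1 < j.1 := hij
        by_cases hj : j.1 < γ
        · have hi : i.1 < γ := lt_trans hij' hj
          simp only [dif_pos hi, dif_pos hj]
          exact hfγ (show (⟨i.1, hi⟩ : Set.Iio γ) < ⟨j.1, hj⟩ from hij')
        · by_cases hi : i.1 < γ
          · simp only [dif_pos hi, dif_neg hj]
            have h1 : fγ ⟨i.1, hi⟩ < x0 := (hfγm _).2
            have h2 : x0 ≤ fW ⟨j.1 - γ, hsub j hj⟩ := by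
              apply hfW.monotone
              show (0 : Ordinal) ≤ j.1 - γ
              exact zero_le
            exact lt_of_lt_of_le h1 h2
          · simp only [dif_neg hi, dif_neg hj]
            apply hfW
            show i.1 - γ < j.1 - γ
            have h1 : γ + (i.1 - γ) = i.1 := Ordinal.add_sub_cancel_of_le (not_lt.1 hi)
            have h2 : γ + (j.1 - γ) = j.1 := Ordinal.add_sub_cancel_of_le (not_lt.1 hj)
            refine (add_lt_add_iff_left γ).1 ?_
            rw [h1, h2]
            exact hij'
      · intro i
        by_cases h : i.1 < γ
        · simp only [dif_pos h]; exact (hfγm _).1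
        · simp only [dif_neg h]; exact (hfWm _).1
    · -- additively indecomposable limit
      have hind : ∀ γ, γ < α → γ + α = α := by
        intro γ hγ
        rcases eq_or_ne γ 0 with rfl | hγ0
        · exact zero_add α
        · have h1 : ¬ α - γ < α := fun h => hdec ⟨γ, hγ, hγ0, h⟩
          have h2 : α - γ = α := le_antisymm (Ordinal.sub_le_self α γ) (not_lt.1 h1)
          calc γ + α = γ + (α - γ) := by rw [h2]
            _ = α := Ordinal.add_sub_cancel_of_le (le_of_lt hγ)
      have habs : ∀ a, a < α → ∀ b, b < α → a + b < α := by
        intro a ha b hb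
        calc a + b < a + α := add_lt_add_right hb a
          _ = α := hind a ha
      have hα0 : (0 : Ordinal) < α := hαlim.pos
      have hPne : Nonempty P := by
        obtain ⟨x, -⟩ := ht_pos_nonempty hw (lt_of_lt_of_le hα0 hs)
        exact ⟨x⟩
      obtain ⟨Dm, hDmht, hDmmin⟩ := (downsets_wf hq s).has_min
        {A : {p : Set P // Dwn p s} | α ≤ ht hw A.1}
        ⟨⟨s, subset_rfl, fun x hx _ _ _ => hx⟩, hs⟩
      set Dst := Dm.1 with hDstdef
      have hDsts : Dwn Dst s := Dm.2
      have hDstht : α ≤ ht hw Dst := hDmht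
      have hproper : ∀ E : Set P, Dwn E s → E ⊂ Dst → ht hw E < α := by
        intro E hE hEsub
        by_contra h
        exact hDmmin ⟨E, hE⟩ (not_lt.1 h) hEsub
      have hup : ∀ U : Set P, U ⊆ Dst → U.Nonempty →
          (∀ x ∈ Dst, ∀ y ∈ U, y ≤ x → x ∈ U) → α ≤ ht hw U := by
        intro U hUD hUne hUup
        set E : Set P := Dst \ U with hEdef
        have hEdwn : Dwn E s := by
          constructor
          · exact fun z hz => hDsts.1 hz.1
          · intro x hx y hy hxy
            have hxD : x ∈ Dst := hDsts.2 x hx y hy.1 hxy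
            exact ⟨hxD, fun hxU => hy.2 (hUup y hy.1 x hxU hxy)⟩
        have hEss : E ⊂ Dst := by
          rw [Set.ssubset_def]
          obtain ⟨u, hu⟩ := hUne
          exact ⟨Set.diff_subset, fun h => (h (hUD hu)).2 hu⟩
        have hEht : ht hw E < α := hproper E hEdwn hEss
        have hDE : {z | z ∈ Dst ∧ z ∉ E} = U := by
          ext z
          simp only [Set.mem_setOf_eq, hEdef, Set.mem_diff, not_and, not_not]
          constructor
          · rintro ⟨hzD, h2⟩; exact h2 hzD
          · intro hzU; exact ⟨hUD hzU, fun _ => hzU⟩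
        have h1 : α ≤ ht hw E + ht hw U := by
          calc α ≤ ht hw Dst := hDstht
            _ ≤ ht hw E + ht hw {z | z ∈ Dst ∧ z ∉ E} :=
                ht_cut hw (hEdwn.trans_subset Set.diff_subset hDsts.1)
            _ = ht hw E + ht hw U := by rw [hDE]
        by_contra hUα
        exact absurd h1 (not_le.2 (habs _ hEht _ (not_le.1 hUα)))
      classical
      set PC : Ordinal.{u} → Prop := fun o =>
        ∃ fc : Set.Iio o → Ordinal.{u}, (∀ i, fc i < α) ∧ ∀ β, β < α → ∃ i, β ≤ fc i with hPCdef
      have hPCα : PC α := ⟨fun i => i.1, fun i => i.2, fun β hβ => ⟨⟨β, hβ⟩, le_rfl⟩⟩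
      set κ := sInf (setOf PC) with hκdef
      have hκPC : PC κ := csInf_mem (s := setOf PC) ⟨α, hPCα⟩
      have hκmin : ∀ o, o < κ → ¬ PC o := by
        intro o ho hPCo
        exact absurd (csInf_le (s := setOf PC) (OrderBot.bddBelow _)
          (show o ∈ setOf PC from hPCo)) (not_le.2 ho)
      obtain ⟨fc, hfc1, hfc2⟩ := hκPC
      have hκ0 : 0 < κ := by
        obtain ⟨i, -⟩ := hfc2 0 hα0
        exact lt_of_le_of_lt (zero_le : (0 : Ordinal) ≤ i.1) i.2
      have hκlim : Order.IsSuccLimit κ := by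
        rcases Ordinal.zero_or_succ_or_isSuccLimit κ with h | ⟨o, ho⟩ | h
        · exact absurd h (ne_of_gt hκ0)
        · exfalso
          have hoκ : ∀ j : Set.Iio o, j.1 < κ := fun j => by
            rw [← ho]; exact lt_trans j.2 (Order.lt_succ o)
          have hoκ' : o < κ := by rw [← ho]; exact Order.lt_succ o
          by_cases hPo : ∀ β, β < α → ∃ j : Set.Iio o, β ≤ fc ⟨j.1, hoκ j⟩
          · exact hκmin o hoκ' ⟨fun j => fc ⟨j.1, hoκ j⟩, fun j => hfc1 _, hPo⟩
          · push_neg at hPo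
            obtain ⟨β₀, hβ₀α, hβ₀⟩ := hPo
            set μ := max β₀ (Order.succ (fc ⟨o, hoκ'⟩)) with hμdef
            have hμα : μ < α := max_lt hβ₀α (hαlim.succ_lt (hfc1 _))
            obtain ⟨i, hi⟩ := hfc2 μ hμα
            have hio : i.1 ≤ o := by
              refine Order.lt_succ_iff.1 ?_
              rw [ho]
              exact i.2
            rcases eq_or_lt_of_le hio with he | hlt
            · have heq : i = ⟨o, hoκ'⟩ := Subtype.ext he
              rw [congrArg fc heq] at hi
              exact absurd (le_trans (le_max_right _ _) hi) (not_le.2 (Order.lt_succ _))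
            · have h2 := hβ₀ ⟨i.1, hlt⟩
              have heq : (⟨(⟨i.1, hlt⟩ : Set.Iio o).1, hoκ ⟨i.1, hlt⟩⟩ : Set.Iio κ) = i :=
                Subtype.ext rfl
              rw [congrArg fc heq] at h2
              exact absurd (le_trans (le_max_left _ _) hi) (not_le.2 h2)
        · exact h
      set fc' : Ordinal.{u} → Ordinal.{u} := fun j =>
        if h : j < κ then fc ⟨j, h⟩ else 0 with hfc'def
      have hfc1' : ∀ j, fc' j < α := by
        intro j
        by_cases h : j < κ
        · simp only [hfc'def, dif_pos h]; exact hfc1 _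
        · simp only [hfc'def, dif_neg h]; exact hα0
      have hfc2' : ∀ β, β < α → ∃ j, j < κ ∧ β ≤ fc' j := by
        intro β hβ
        obtain ⟨i, hi⟩ := hfc2 β hβ
        refine ⟨i.1, i.2, ?_⟩
        have heq : (⟨i.1, i.2⟩ : Set.Iio κ) = i := Subtype.ext rfl
        show β ≤ if h : i.1 < κ then fc ⟨i.1, h⟩ else 0
        rw [dif_pos (show i.1 < κ from i.2)]
        exact le_trans hi (le_of_eq (congrArg fc heq.symm))
      set g : Ordinal.{u} → Ordinal.{u} := fun i =>
        ⨆ j : Set.Iio (min κ i), Order.succ (fc' j.1) with hgdef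
      have hgle : ∀ i c, (∀ j, j < κ → j < i → Order.succ (fc' j) ≤ c) → g i ≤ c :=
        fun i c h => Ordinal.iSup_le fun j =>
          h j.1 (lt_of_lt_of_le j.2 (min_le_left _ _)) (lt_of_lt_of_le j.2 (min_le_right _ _))
      have hlg : ∀ i j, j < κ → j < i → Order.succ (fc' j) ≤ g i :=
        fun i j h1 h2 =>
          Ordinal.le_iSup (fun j : Set.Iio (min κ i) => Order.succ (fc' j.1)) ⟨j, lt_min h1 h2⟩
      have hgmono : ∀ i i', i ≤ i' → g i ≤ g i' :=
        fun i i' h => hgle i _ fun j hj1 hj2 => hlg i' j hj1 (lt_of_lt_of_le hj2 h)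
      have hgdest : ∀ i β, β < g i → ∃ j, j < κ ∧ j < i ∧ β ≤ fc' j := by
        intro i β hβ
        rw [hgdef, Ordinal.lt_iSup_iff] at hβ
        obtain ⟨j, hj⟩ := hβ
        exact ⟨j.1, lt_of_lt_of_le j.2 (min_le_left _ _),
          lt_of_lt_of_le j.2 (min_le_right _ _), Order.lt_succ_iff.1 hj⟩
      have hg0 : ∀ β : Ordinal, ¬ β < g 0 := by
        intro β h
        obtain ⟨j, -, hj, -⟩ := hgdest 0 β h
        exact not_lt_zero' hj
      have hgsucc : ∀ i, i < κ → g (Order.succ i) < α := by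
        intro i hiκ
        by_contra h
        have hiκ' : Order.succ i < κ := hκlim.succ_lt hiκ
        refine hκmin (Order.succ i) hiκ' ⟨fun j => fc' j.1, fun j => hfc1' j.1, ?_⟩
        intro β hβ
        obtain ⟨j, hjκ, hji, hjβ⟩ := hgdest (Order.succ i) β (lt_of_lt_of_le hβ (not_lt.1 h))
        exact ⟨⟨j, hji⟩, hjβ⟩
      have hgcof : ∀ β, β < α → ∃ i, i < κ ∧ β < g (Order.succ i) := by
        intro β hβ
        obtain ⟨j, hjκ, hjβ⟩ := hfc2' β hβ
        exact ⟨j, hjκ, lt_of_lt_of_le (Order.lt_succ_iff.2 hjβ)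
          (hlg (Order.succ j) j hjκ (Order.lt_succ j))⟩
      set gd : Ordinal.{u} → Ordinal.{u} := fun i => g (Order.succ i) - g i with hgddef
      have hgdα : ∀ i, i < κ → gd i < α := fun i h =>
        lt_of_le_of_lt (Ordinal.sub_le_self _ _) (hgsucc i h)
      set Xf : Ordinal.{u} → P := chainAux hw hPne Dst gd with hXfdef
      set Q : Ordinal.{u} → Set P := chainQ hw hPne Dst gd with hQdef
      have hQup : ∀ i, Q i ⊆ Dst := fun i z hz => hz.1
      have key : ∀ i, i < κ → ∃ x, goodPt hw hPne Dst gd i x := by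
        intro i
        induction i using Ordinal.induction with
        | _ i IHi =>
        intro hiκ
        have pick : ∀ j, j < i → j < κ → goodPt hw hPne Dst gd j (Xf j) := by
          intro j hj hjκ
          have h := IHi j hj hjκ
          rw [hXfdef, chainAux_eq hw hPne Dst gd j, dif_pos h]
          exact h.choose_spec
        have hchain : ∀ j j', j < i → j' < j → j < κ → Xf j' < Xf j := by
          intro j j' hj hj' hjκ
          exact (pick j hj hjκ).1.2 j' hj'
        have hQne : (Q i).Nonempty := by
          rcases Ordinal.zero_or_succ_or_isSuccLimit i with h0 | ⟨o, ho⟩ | hlim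
          · subst h0
            obtain ⟨x, hx⟩ := ht_pos_nonempty hw (lt_of_lt_of_le hα0 hDstht)
            exact ⟨x, hx, fun j hj => absurd hj not_lt_zero'⟩
          · subst ho
            have hoi : o < Order.succ o := Order.lt_succ o
            have hoκ : o < κ := lt_trans hoi hiκ
            obtain ⟨-, -, w, hwQ, how⟩ := pick o hoi hoκ
            refine ⟨w, hwQ.1, fun j hj => ?_⟩
            rcases eq_or_lt_of_le (Order.lt_succ_iff.1 hj) with rfl | hj'
            · exact how
            · exact lt_trans (hchain o j hoi hj' hoκ) how
          · by_contra hQe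
            rw [Set.not_nonempty_iff_eq_empty] at hQe
            have hcover : ∀ z ∈ Dst, ∃ j, j < i ∧ ¬ Xf j < z := by
              intro z hz
              by_contra h
              push_neg at h
              have hzQ : z ∈ Q i := ⟨hz, fun j hj => h j hj⟩
              rw [hQe] at hzQ
              exact hzQ
            have hEdwn : ∀ j : Ordinal, Dwn {z | z ∈ Dst ∧ ¬ Xf j < z} s := by
              intro j
              constructor
              · exact fun z hz => hDsts.1 hz.1
              · intro x hx y hy hxy
                exact ⟨hDsts.2 x hx y hy.1 hxy, fun hlt => hy.2 (lt_of_lt_of_le hlt hxy)⟩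
            have hEht : ∀ j, j < i → ht hw {z | z ∈ Dst ∧ ¬ Xf j < z} < α := by
              intro j hj
              refine hproper _ (hEdwn j) ?_
              rw [Set.ssubset_def]
              constructor
              · exact fun z hz => hz.1
              · intro hsubst
                have hsj : Order.succ j < i := hlim.succ_lt hj
                have hsjκ : Order.succ j < κ := lt_trans hsj hiκ
                have hXj := (pick (Order.succ j) hsj hsjκ).1
                exact (hsubst hXj.1).2 (hXj.2 j (Order.lt_succ j))
            refine hκmin i hiκ ⟨fun j => ht hw {z | z ∈ Dst ∧ ¬ Xf j.1 < z},
              fun j => hEht j.1 j.2, ?_⟩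
            intro β hβ
            have hβht : β < ht hw Dst := lt_of_lt_of_le hβ hDstht
            rw [ht, Ordinal.lt_iSup_iff] at hβht
            obtain ⟨z, hz⟩ := hβht
            obtain ⟨j, hji, hjz⟩ := hcover z.1 z.2
            have hzE : z.1 ∈ {z | z ∈ Dst ∧ ¬ Xf j < z} := ⟨z.2, hjz⟩
            have hEDdwn : Dwn {z | z ∈ Dst ∧ ¬ Xf j < z} Dst :=
              (hEdwn j).trans_subset (fun w hw' => hw'.1) hDsts.1
            have hrkeq : rk hw {z | z ∈ Dst ∧ ¬ Xf j < z} z.1 = rk hw Dst z.1 :=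
              rk_eq_of_down hw hEDdwn z.1 hzE
            refine ⟨⟨j, hji⟩, le_of_lt ?_⟩
            calc β < Order.succ (rk hw Dst z.1) := hz
              _ = Order.succ (rk hw {z | z ∈ Dst ∧ ¬ Xf j < z} z.1) := by rw [hrkeq]
              _ ≤ ht hw {z | z ∈ Dst ∧ ¬ Xf j < z} := succ_rk_le_ht hw hzE
        have hQht : α ≤ ht hw (Q i) := hup (Q i) (hQup i) hQne
          (fun x hx y hy hxy => ⟨hx, fun j hj => lt_of_lt_of_le (hy.2 j hj) hxy⟩)
        have h2 : Order.succ (Order.succ (gd i)) ≤ ht hw (Q i) :=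
          le_trans (Order.succ_le_of_lt (hαlim.succ_lt (hgdα i hiκ))) hQht
        obtain ⟨w, hwQ, hwrk⟩ := ht_dest hw h2
        obtain ⟨x, hxrel, hxrk⟩ := rk_dest hw hwrk
        exact ⟨x, hxrel.1, hxrk, w, hxrel.2.1, hxrel.2.2⟩
      have hgood : ∀ i, i < κ → goodPt hw hPne Dst gd i (Xf i) := by
        intro i hiκ
        have h := key i hiκ
        rw [hXfdef, chainAux_eq hw hPne Dst gd i, dif_pos h]
        exact h.choose_spec
      have hXQ : ∀ i, i < κ → Xf i ∈ Q i := fun i h => (hgood i h).1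
      have hblockht : ∀ i, i < κ → gd i ≤ ht hw {z | z ∈ Q i ∧ z < Xf i} := fun i h =>
        le_trans (hgood i h).2.1 (rk_le_ht_lt hw (hXQ i h))
      have hblocks : ∀ i, i < κ → ∃ c : Set.Iio (gd i) → P, StrictMono c ∧
          ∀ t, c t ∈ {z | z ∈ Q i ∧ z < Xf i} :=
        fun i h => IH (gd i) (hgdα i h) _ (hblockht i h)
      set cT : Ordinal.{u} → Ordinal.{u} → P := fun i t =>
        if h : i < κ ∧ t < gd i then (hblocks i h.1).choose ⟨t, h.2⟩ else hPne.some with hcTdef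
      have hcT1 : ∀ i t t', i < κ → t < t' → ∀ h' : t' < gd i, cT i t < cT i t' := by
        intro i t t' hiκ htt' h'
        have h1 : i < κ ∧ t < gd i := ⟨hiκ, lt_trans htt' h'⟩
        have h2 : i < κ ∧ t' < gd i := ⟨hiκ, h'⟩
        simp only [hcTdef, dif_pos h1, dif_pos h2]
        exact (hblocks i h1.1).choose_spec.1
          (show (⟨t, h1.2⟩ : Set.Iio (gd i)) < ⟨t', h2.2⟩ from htt')
      have hcT2 : ∀ i t, i < κ → ∀ h' : t < gd i, cT i t ∈ {z | z ∈ Q i ∧ z < Xf i} := by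
        intro i t hiκ h'
        have h1 : i < κ ∧ t < gd i := ⟨hiκ, h'⟩
        simp only [hcTdef, dif_pos h1]
        exact (hblocks i h1.1).choose_spec.2 _
      have hblk : ∀ β : Ordinal, β < α → ∃ b, b < κ ∧ g b ≤ β ∧ β < g (Order.succ b) := by
        intro β hβ
        obtain ⟨i₁, hi₁κ, hi₁⟩ := hgcof β hβ
        set S := {o : Ordinal | β < g o} with hSdef
        have hSne : S.Nonempty := ⟨Order.succ i₁, hi₁⟩
        set i₀ := sInf S with hi₀def
        have hi₀S : i₀ ∈ S := csInf_mem (s := S) hSne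
        have hi₀min : ∀ o, o < i₀ → ¬ β < g o := fun o ho hgo =>
          absurd (csInf_le (s := S) (OrderBot.bddBelow _) (show o ∈ S from hgo))
            (not_le.2 ho)
        have hi₀le : i₀ ≤ Order.succ i₁ :=
          csInf_le (s := S) (OrderBot.bddBelow _) (show Order.succ i₁ ∈ S from hi₁)
        rcases Ordinal.zero_or_succ_or_isSuccLimit i₀ with h0 | ⟨b, hb⟩ | hlim
        · exact absurd (h0 ▸ hi₀S) (hg0 β)
        · refine ⟨b, ?_, ?_, ?_⟩
          · have hbi₀ : b < i₀ := by rw [← hb]; exact Order.lt_succ b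
            exact lt_of_lt_of_le hbi₀ (le_trans hi₀le (le_of_lt (hκlim.succ_lt hi₁κ)))
          · exact not_lt.1 (hi₀min b (by rw [← hb]; exact Order.lt_succ b))
          · rw [hb]; exact hi₀S
        · exfalso
          obtain ⟨j, hjκ, hji, hjβ⟩ := hgdest i₀ β hi₀S
          have hj2 : β < g (Order.succ j) := lt_of_lt_of_le (Order.lt_succ_iff.2 hjβ)
            (hlg _ _ hjκ (Order.lt_succ j))
          exact hi₀min (Order.succ j) (hlim.succ_lt hji) hj2
      choose bl hblκ hbl1 hbl2 using hblk
      have hsubpf : ∀ (β : Ordinal) (hβ : β < α), β - g (bl β hβ) < gd (bl β hβ) := by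
        intro β hβ
        have h1 : g (bl β hβ) + (β - g (bl β hβ)) = β :=
          Ordinal.add_sub_cancel_of_le (hbl1 β hβ)
        have h2 : g (bl β hβ) + gd (bl β hβ) = g (Order.succ (bl β hβ)) :=
          Ordinal.add_sub_cancel_of_le (hgmono _ _ (le_of_lt (Order.lt_succ _)))
        refine (add_lt_add_iff_left (g (bl β hβ))).1 ?_
        rw [h1, h2]
        exact hbl2 β hβ
      have hblmono : ∀ (β β' : Ordinal) (hβ : β < α) (hβ' : β' < α),
          β < β' → bl β hβ ≤ bl β' hβ' := by
        intro β β' hβ hβ' h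
        by_contra hlt
        push_neg at hlt
        have h1 : Order.succ (bl β' hβ') ≤ bl β hβ := Order.succ_le_of_lt hlt
        have h2 : g (Order.succ (bl β' hβ')) ≤ g (bl β hβ) := hgmono _ _ h1
        have h3 : β' < g (bl β hβ) := lt_of_lt_of_le (hbl2 β' hβ') h2
        exact absurd (lt_of_lt_of_le h3 (hbl1 β hβ)) (lt_asymm h)
      refine ⟨fun i => cT (bl i.1 i.2) (i.1 - g (bl i.1 i.2)), ?_, ?_⟩
      · intro i j hij
        have hij' : i.1 < j.1 := hij
        have hble : bl i.1 i.2 ≤ bl j.1 j.2 := hblmono _ _ _ _ hij'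
        show cT (bl i.1 i.2) (i.1 - g (bl i.1 i.2)) < cT (bl j.1 j.2) (j.1 - g (bl j.1 j.2))
        rcases eq_or_lt_of_le hble with heq | hlt
        · rw [heq]
          refine hcT1 _ _ _ (hblκ j.1 j.2) ?_ (hsubpf j.1 j.2)
          have h1 : g (bl j.1 j.2) + (i.1 - g (bl j.1 j.2)) = i.1 :=
            Ordinal.add_sub_cancel_of_le (heq ▸ hbl1 i.1 i.2)
          have h2 : g (bl j.1 j.2) + (j.1 - g (bl j.1 j.2)) = j.1 :=
            Ordinal.add_sub_cancel_of_le (hbl1 j.1 j.2)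
          refine (add_lt_add_iff_left (g (bl j.1 j.2))).1 ?_
          rw [h1, h2]
          exact hij'
        · have hi' := hcT2 (bl i.1 i.2) _ (hblκ i.1 i.2) (hsubpf i.1 i.2)
          have hj' := hcT2 (bl j.1 j.2) _ (hblκ j.1 j.2) (hsubpf j.1 j.2)
          exact lt_trans hi'.2 (hj'.1.2 (bl i.1 i.2) hlt)
      · intro i
        exact hDsts.1 (hQup _ ((hcT2 (bl i.1 i.2) _ (hblκ i.1 i.2) (hsubpf i.1 i.2)).1))


/-- monotone maps of relations decrease `relRank` -/
theorem relRank_le_of_map {A : Type u} {B : Type u} {r : A → A → Prop} {r' : B → B → Prop}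
    (F : A → B) (hmap : ∀ a b, r a b → r' (F a) (F b)) (hwf' : WellFounded r') :
    relRank r ≤ relRank r' := by
  have hwf : WellFounded r :=
    Subrelation.wf (r := InvImage r' F) (fun {a b} h => hmap a b h) (InvImage.wf F hwf')
  have hrank : ∀ a, (hwf.apply a).rank ≤ (hwf'.apply (F a)).rank := by
    intro a
    induction a using hwf.induction with
    | _ a IHa =>
      rw [Acc.rank_eq]
      refine Ordinal.iSup_le fun b => ?_
      have h1 : (hwf.apply b.1).rank ≤ (hwf'.apply (F b.1)).rank := IHa b.1 b.2
      exact Order.succ_le_of_lt (lt_of_le_of_lt h1 (Acc.rank_lt_of_rel _ (hmap b.1 a b.2)))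
  rw [relRank, relRank, dif_pos hwf, dif_pos hwf']
  refine Ordinal.iSup_le fun a => ?_
  exact le_trans (Order.succ_le_succ (hrank a))
    (Ordinal.le_iSup (fun b : B => Order.succ ((hwf'.apply b).rank)) (F a))

/-- the tree of incomparable sequences over a WQO is well-founded -/
theorem incSeqs_wf {A : Type u} [PartialOrder A] (h : IsWQO A) :
    WellFounded (extRel (IncSeqs A)) := by
  haveI : IsIrrefl ↥(IncSeqs A) (extRel (IncSeqs A)) := ⟨fun a ha => ha.2 rfl⟩
  haveI : IsTrans ↥(IncSeqs A) (extRel (IncSeqs A)) := by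
    refine ⟨fun a b c hab hbc => ⟨hbc.1.trans hab.1, fun hac => ?_⟩⟩
    have h1 : (c.1).length ≤ (b.1).length := hbc.1.length_le
    have h2 : (b.1).length ≤ (a.1).length := hab.1.length_le
    have h4 : (c.1).length = (a.1).length := by rw [hac]
    exact hbc.2 (hbc.1.eq_of_length (by omega))
  haveI : IsStrictOrder ↥(IncSeqs A) (extRel (IncSeqs A)) := ⟨⟩
  rw [RelEmbedding.wellFounded_iff_isEmpty]
  refine ⟨fun emb => ?_⟩
  have hrel : ∀ n : ℕ, extRel (IncSeqs A) (emb (n + 1)) (emb n) :=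
    fun n => emb.map_rel_iff.2 (Nat.lt_succ_self n)
  have hpref : ∀ m n : ℕ, m ≤ n → ((emb m).1 : List A) <+: (emb n).1 := by
    intro m n hmn
    induction n, hmn using Nat.le_induction with
    | base => exact List.prefix_refl _
    | succ k hk IHk => exact IHk.trans (hrel k).1
  have hlen : ∀ n : ℕ, n < ((emb n).1).length := by
    intro n
    induction n with
    | zero => exact List.length_pos_iff.2 (emb 0).2.1
    | succ k IHk =>
      have h1 : ((emb k).1).length < ((emb (k + 1)).1).length := by
        refine lt_of_le_of_ne (hrel k).1.length_le ?_
        intro hl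
        exact (hrel k).2 ((hrel k).1.eq_of_length hl)
      omega
  have hb : ∀ k : ℕ, k < ((emb (k + 1)).1).length :=
    fun k => lt_trans (Nat.lt_succ_self k) (hlen (k + 1))
  have hcoh : ∀ k n : ℕ, k + 1 ≤ n → ∀ hkn : k < ((emb n).1).length,
      ((emb (k + 1)).1)[k]'(hb k) = ((emb n).1)[k]'hkn :=
    fun k n hkn hk2 => (hpref (k + 1) n hkn).getElem (hb k)
  obtain ⟨i, j, hij, hle⟩ := h fun k => ((emb (k + 1)).1)[k]'(hb k)
  have hjb : j < ((emb (j + 1)).1).length := hb j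
  have hib : i < ((emb (j + 1)).1).length := lt_trans hij hjb
  have hpw := List.pairwise_iff_getElem.1 (emb (j + 1)).2.2 i j hib hjb hij
  rw [hcoh i (j + 1) (by omega) hib] at hle
  exact hpw.1 hle

/-- extract a monotone subsequence -/
theorem isWQO_subseq {A : Type u} [PartialOrder A] (h : IsWQO A) (f : ℕ → A) :
    ∃ g : ℕ ↪o ℕ, ∀ m n, m ≤ n → f (g m) ≤ f (g n) := by
  have hpwo : (Set.univ : Set A).PartiallyWellOrderedOn (· ≤ ·) := fun f => h fun n => (f n).1
  exact hpwo.exists_monotone_subseq (f := f) fun _ => Set.mem_univ _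

/-- products of WQOs over `Fin (n+1)` are WQO -/
theorem isWQO_pi : ∀ (n : ℕ) (P : Fin (n + 1) → Type u) (_ : ∀ i, PartialOrder (P i)),
    (∀ i, IsWQO (P i)) → IsWQO (∀ i, P i) := by
  intro n
  induction n with
  | zero =>
    intro P inst h f
    obtain ⟨i, j, hij, hle⟩ := h 0 fun k => f k 0
    refine ⟨i, j, hij, fun idx => ?_⟩
    have hidx : idx = 0 := Fin.fin_one_eq_zero idx
    rw [hidx]
    exact hle
  | succ n IHn =>
    intro P inst h f
    obtain ⟨g, hg⟩ := isWQO_subseq (h 0) fun k => f k 0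
    obtain ⟨a, b, hab, hle⟩ := IHn (fun i => P i.succ) (fun i => inferInstance)
      (fun i => h i.succ) (fun k i => f (g k) i.succ)
    refine ⟨g a, g b, g.strictMono hab, fun idx => ?_⟩
    refine Fin.cases ?_ ?_ idx
    · exact hg a b (le_of_lt hab)
    · intro i
      exact hle i

/-- width is monotone along order-reflecting injections -/
theorem width_le_of_embed {A B : Type u} [PartialOrder A] [PartialOrder B] (f : A → B)
    (hf : ∀ x y, f x ≤ f y ↔ x ≤ y) (hwf : WellFounded (extRel (IncSeqs B))) :
    width A ≤ width B := by
  have hinj : Function.Injective f := by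
    intro x y hxy
    exact le_antisymm ((hf x y).1 (le_of_eq hxy)) ((hf y x).1 (le_of_eq hxy.symm))
  have hmem : ∀ l : List A, l ∈ IncSeqs A → l.map f ∈ IncSeqs B := by
    intro l hl
    constructor
    · intro hnil
      exact hl.1 (List.map_eq_nil_iff.1 hnil)
    · refine hl.2.map f ?_
      intro a b hab
      exact ⟨fun hle => hab.1 ((hf a b).1 hle), fun hle => hab.2 ((hf b a).1 hle)⟩
  have hrel : ∀ s t : ↥(IncSeqs A), extRel (IncSeqs A) s t →
      extRel (IncSeqs B) ⟨s.1.map f, hmem s.1 s.2⟩ ⟨t.1.map f, hmem t.1 t.2⟩ := by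
    intro s t hst
    constructor
    · exact hst.1.map f
    · intro heq
      exact hst.2 (List.map_injective_iff.2 hinj heq)
  exact relRank_le_of_map _ hrel hwf


theorem height_le_ht (hw : WellFounded ((· < ·) : P → P → Prop)) :
    height P ≤ ht hw Set.univ := by
  unfold height treeRank relRank
  by_cases hWF : WellFounded (extRel (DecSeqs P))
  · rw [dif_pos hWF]
    have hlast : ∀ l : ↥(DecSeqs P),
        (hWF.apply l).rank ≤ rk hw Set.univ (l.1.getLast l.2.1) := by
      intro l
      induction l using hWF.induction with
      | _ l IHl =>
        rw [Acc.rank_eq]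
        refine Ordinal.iSup_le fun b => ?_
        obtain ⟨⟨B, hB⟩, hpre, hne⟩ := b
        obtain ⟨t, htapp⟩ := hpre
        have htapp' : l.1 ++ t = B := htapp
        subst htapp'
        have htne : t ≠ [] := by
          rintro rfl
          exact hne (List.append_nil l.1).symm
        have hcross := (List.pairwise_append.1 hB.2).2.2
        have hlt : t.getLast htne < l.1.getLast l.2.1 :=
          hcross _ (List.getLast_mem l.2.1) _ (List.getLast_mem htne)
        have hIH : (hWF.apply ⟨l.1 ++ t, hB⟩).rank ≤
            rk hw Set.univ ((l.1 ++ t).getLast hB.1) :=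
          IHl ⟨l.1 ++ t, hB⟩ ⟨⟨t, rfl⟩, hne⟩
        have hgl : (l.1 ++ t).getLast hB.1 = t.getLast htne := by
          rw [List.getLast_append_of_ne_nil hB.1 htne]
        rw [hgl] at hIH
        refine Order.succ_le_of_lt (lt_of_le_of_lt hIH ?_)
        exact rk_lt hw ⟨Set.mem_univ _, Set.mem_univ _, hlt⟩
    refine Ordinal.iSup_le fun l => ?_
    exact le_trans (Order.succ_le_succ (hlast l))
      (succ_rk_le_ht hw (Set.mem_univ _))
  · rw [dif_neg hWF]
    exact zero_le

theorem exists_height_chain (hq : IsWQO P) :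
    ∃ e : (height P).ToType → P, StrictMono e := by
  have hw := isWQO_wf hq
  obtain ⟨f, hf, -⟩ := chain_of_le_ht hw hq (height P) Set.univ (height_le_ht hw)
  exact ⟨fun t => f ((Ordinal.ToType.mk (o := height P)).symm t),
    hf.comp (OrderIso.strictMono _)⟩

end Stmt18

/-- The product of the heights (as chains) of WQO posets embeds
into their product as an induced substructure; hence the corresponding width
inequality. -/
theorem stmt_18 {n : ℕ} (P : Fin (n + 1) → Type u) [∀ i, PartialOrder (P i)]
    (hwqo : ∀ i, IsWQO (P i)) :
    (∃ f : (∀ i, (height (P i)).ToType) → (∀ i, P i),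
        ∀ x y, f x ≤ f y ↔ x ≤ y) ∧
    width (∀ i, (height (P i)).ToType) ≤ width (∀ i, P i) := by
  have hwolk := fun i => Stmt18.exists_height_chain (hwqo i)
  choose e he using hwolk
  have hf : ∀ x y : ∀ i, (height (P i)).ToType,
      (fun i => e i (x i)) ≤ (fun i => e i (y i)) ↔ x ≤ y := by
    intro x y
    constructor
    · intro h i
      exact ((he i).le_iff_le).1 (h i)
    · intro h i
      exact ((he i).le_iff_le).2 (h i)
  refine ⟨⟨fun x i => e i (x i), hf⟩, ?_⟩
  have hPwqo : IsWQO (∀ i, P i) := Stmt18.isWQO_pi n P inferInstance hwqo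
  exact Stmt18.width_le_of_embed (fun x i => e i (x i)) hf (Stmt18.incSeqs_wf hPwqo)
end
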